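/- arXiv:1406.6664 — 9 statements merged into one kernel-verified Lean document; each statement's English description precedes it below -/
import Mathlib

section
/- If f, g ∈ z + (1/z)ℂ[[1/z]] are formal Laurent series (in the field ℂ((1/z))) satisfying f ∘ g = z, and f is algebraic over ℂ(z), then g is also algebraic over ℂ(z). -/
/-- `z ∈ ℂ((1/z))`, modeled as the Laurent series field `LaurentSeries ℂ = HahnSeries ℤ ℂ`
in the variable `T = 1/z`; thus `z = T⁻¹ = single (-1) 1`. -/
noncomputable def zL : LaurentSeries ℂ := HahnSeries.single (-1) 1

/-- `f ∈ ℂ((1/z))` is algebraic over `ℂ(z)` if `P(z, f) = 0` for some nonzero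
`P ∈ ℂ[x,y]`. -/
def IsAlgL (f : LaurentSeries ℂ) : Prop :=
  ∃ P : MvPolynomial (Fin 2) ℂ, P ≠ 0 ∧ MvPolynomial.aeval ![zL, f] P = 0

/-- Composition `f ∘ g` of Laurent series (substitution `z ↦ g`): writing
`f = Σₙ f.coeff n · Tⁿ` with `T = 1/z`, we have `f ∘ g = Σₙ f.coeff n · (g⁻¹)ⁿ`.
When `g` has valuation `1` (i.e. `g ∈ z + ℂ[[1/z]]`), `(g⁻¹)ⁿ` has `T`-order `n`, so
the coefficient of `Tᵐ` in the sum is the finite sum over `-1 ≤ n ≤ m`; this is taken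
as the definition (it agrees with the usual composition for
`f, g ∈ z + (1/z)ℂ[[1/z]]`). -/
noncomputable def compL (f g : LaurentSeries ℂ) : LaurentSeries ℂ where
  coeff m := ∑ n ∈ Finset.Icc (-1 : ℤ) m, f.coeff n * ((g⁻¹) ^ n).coeff m
  isPWO_support' := by
    refine Set.IsPWO.mono (Set.IsWF.isPWO ((bddBelow_Ici (a := (-1 : ℤ))).wellFoundedOn_lt)) ?_
    intro m hm
    rw [Set.mem_Ici]
    by_contra h
    push_neg at h
    apply hm
    simp only []
    rw [Finset.Icc_eq_empty (by omega), Finset.sum_empty]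

/-!
Work in the variable `T = 1/z`. Since `u = g⁻¹` has positive `T`-order, evaluating power series
at `u` (`PowerSeries.heval`) extends, `u` being invertible, to an algebra endomorphism `σ` of the
localization `ℂ((T))` of `ℂ⟦T⟧` at `T`; it sends `z = T⁻¹` to `g`. As `u` has order exactly one,
`uⁿ` has order `n` for every `n ∈ ℤ`, so the coefficients of `σ f` are the finite sums defining
`f ∘ g`, and `σ f = z`. Applying `σ` to `P(z, f) = 0` gives `P(g, z) = 0`.
-/

open scoped PowerSeries

namespace HahnSeries

section Order

variable {Γ R : Type*} [Zero Γ] [LinearOrder Γ] [Zero R] {x : R⟦Γ⟧}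

theorem ne_zero_of_order_ne_zero (hx : x.order ≠ 0) : x ≠ 0 := by
  rintro rfl
  exact hx order_zero

theorem orderTop_pos_of_order_pos (hx : 0 < x.order) : 0 < x.orderTop := by
  rw [← order_eq_orderTop_of_ne_zero (ne_zero_of_order_ne_zero hx.ne')]
  exact WithTop.coe_lt_coe.mpr hx

theorem order_eq_of_coeff_ne_zero {a : Γ} (ha : x.coeff a ≠ 0) (hlt : ∀ n < a, x.coeff n = 0) :
    x.order = a :=
  le_antisymm (order_le_of_coeff_ne_zero ha) <| not_lt.mp fun h =>
    ha (coeff_order_eq_zero.mp (hlt _ h) ▸ coeff_zero)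

end Order

theorem order_zpow {Γ K : Type*} [AddCommGroup Γ] [LinearOrder Γ] [IsOrderedAddMonoid Γ] [Field K]
    {x : K⟦Γ⟧} (hx : x ≠ 0) (n : ℤ) : (x ^ n).order = n • x.order := by
  obtain ⟨k, rfl | rfl⟩ := n.eq_nat_or_neg
  · simp
  · have h := order_mul (pow_ne_zero k hx) (inv_ne_zero (pow_ne_zero k hx))
    rw [mul_inv_cancel₀ (pow_ne_zero k hx), order_one, order_pow] at h
    rw [zpow_neg, zpow_natCast, neg_smul, natCast_zsmul]
    exact eq_neg_of_add_eq_zero_right h.symm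

end HahnSeries

namespace LaurentSeries

open HahnSeries PowerSeries

variable {K : Type*} [Field K]

theorem coeff_zpow_eq_zero_of_lt {u : K⸨X⸩} (hu : u.order = 1) {n m : ℤ} (hmn : m < n) :
    (u ^ n).coeff m = 0 :=
  coeff_eq_zero_of_lt_order <| by
    rwa [order_zpow (ne_zero_of_order_ne_zero (hu ▸ one_ne_zero)), hu, smul_eq_mul, mul_one]

theorem isUnit_heval_of_mem_powers_X {u : K⸨X⸩} (hu : 0 < u.order)
    (y : Submonoid.powers (X : K⟦X⟧)) : IsUnit ((heval u : K⟦X⟧ →+* K⸨X⸩) y) := by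
  obtain ⟨_, k, rfl⟩ := y
  change IsUnit (heval u (X ^ k))
  rw [map_pow, heval_X u (orderTop_pos_of_order_pos hu)]
  exact (ne_zero_of_order_ne_zero hu.ne').isUnit.pow k

noncomputable def subst (u : K⸨X⸩) (hu : 0 < u.order) : K⸨X⸩ →ₐ[K] K⸨X⸩ where
  __ := IsLocalization.lift (M := Submonoid.powers (X : K⟦X⟧)) (isUnit_heval_of_mem_powers_X hu)
  commutes' c := by
    change IsLocalization.lift _ (algebraMap K⟦X⟧ K⸨X⸩ (algebraMap K K⟦X⟧ c)) = _
    rw [IsLocalization.lift_eq]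
    change heval u _ = _
    rw [PowerSeries.algebraMap_eq, heval_C, HahnSeries.algebraMap_apply', PowerSeries.algebraMap_eq,
      ofPowerSeries_C, ← C_mul_eq_smul, mul_one]

section subst

variable {u : K⸨X⸩} (hu : 0 < u.order)

theorem subst_coe (F : K⟦X⟧) : subst u hu F = heval u F := by
  rw [← coe_algebraMap]
  exact IsLocalization.lift_eq _ F

theorem subst_single_one (n : ℤ) : subst u hu (single n 1) = u ^ n := by
  rw [RatFunc.single_zpow, map_zpow₀, ← ofPowerSeries_X, subst_coe,
    heval_X u (orderTop_pos_of_order_pos hu)]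

end subst

theorem coeff_zpow_mul_heval {u : K⸨X⸩} (hu : u.order = 1) (F : K⟦X⟧) (a m : ℤ) :
    (u ^ a * heval u F).coeff m
      = ∑ k ∈ Finset.range (m - a + 1).toNat, F.coeff k * (u ^ (a + k)).coeff m := by
  have hu0 : u ≠ 0 := ne_zero_of_order_ne_zero (hu ▸ one_ne_zero)
  have hterm (k : ℕ) : ((u ^ a • SummableFamily.powerSeriesFamily u F) k).coeff m
      = F.coeff k * (u ^ (a + k)).coeff m := by
    change (u ^ a * SummableFamily.powerSeriesFamily u F k).coeff m = _
    rw [SummableFamily.powerSeriesFamily_of_orderTop_pos (orderTop_pos_of_order_pos (by simp [hu])),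
      ← single_zero_mul_eq_smul, mul_left_comm, coeff_single_zero_mul, zpow_add₀ hu0,
      zpow_natCast]
  rw [heval_apply, ← SummableFamily.hsum_smul,
    SummableFamily.coeff_hsum_eq_sum_of_subset (t := Finset.range (m - a + 1).toNat)]
  · simp only [hterm]
  · intro k hk
    rw [Set.mem_ofPred_eq, hterm] at hk
    rw [Finset.coe_range, Set.mem_Iio]
    by_contra hlt
    exact hk (by rw [coeff_zpow_eq_zero_of_lt hu (by omega), mul_zero])

theorem coeff_subst {u : K⸨X⸩} (hu : 0 < u.order) (hu1 : u.order = 1) {h : K⸨X⸩} {b : ℤ}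
    (hb : ∀ n < b, h.coeff n = 0) (m : ℤ) :
    (subst u hu h).coeff m = ∑ n ∈ Finset.Icc b m, h.coeff n * (u ^ n).coeff m := by
  rcases eq_or_ne h 0 with rfl | h0
  · simp
  have hb_le : b ≤ h.order := not_lt.mp fun hlt => h0 (coeff_order_eq_zero.mp (hb _ hlt))
  rw [← Finset.sum_subset (Finset.Icc_subset_Icc hb_le le_rfl) fun n hn hn' => by
      rw [coeff_eq_zero_of_lt_order (by simp_all), zero_mul]]
  conv_lhs => rw [← single_order_mul_powerSeriesPart h]
  rw [map_mul, subst_single_one, subst_coe, coeff_zpow_mul_heval hu1]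
  refine Finset.sum_nbij' (fun k => h.order + k) (fun n => (n - h.order).toNat)
    ?_ ?_ ?_ ?_ fun k _ => by rw [powerSeriesPart_coeff]
  all_goals
    intro n hn
    simp only [Finset.mem_range, Finset.mem_Icc] at hn ⊢
    omega

end LaurentSeries

theorem IsAlgL.of_algHom {f g : LaurentSeries ℂ} (σ : LaurentSeries ℂ →ₐ[ℂ] LaurentSeries ℂ)
    (hz : σ zL = g) (hf : σ f = zL) (halg : IsAlgL f) : IsAlgL g := by
  obtain ⟨P, hP0, hPf⟩ := halg
  refine ⟨MvPolynomial.rename (Equiv.swap 0 1) P,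
    (map_ne_zero_iff _ (MvPolynomial.rename_injective _ (Equiv.injective _))).mpr hP0, ?_⟩
  have hswap : ![zL, g] ∘ Equiv.swap (0 : Fin 2) 1 = fun i => σ (![zL, f] i) := by
    ext i
    fin_cases i <;> simp [hz, hf]
  rw [MvPolynomial.aeval_rename, hswap, ← MvPolynomial.comp_aeval_apply, hPf, map_zero]

open HahnSeries LaurentSeries in
theorem inverse_composition_algebraic_general (f g : LaurentSeries ℂ)
    (hf0 : ∀ n : ℤ, n ≤ 0 → n ≠ -1 → f.coeff n = 0)
    (hg1 : g.coeff (-1) = 1) (hg0 : ∀ n : ℤ, n ≤ 0 → n ≠ -1 → g.coeff n = 0)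
    (hcomp : compL f g = zL) (halg : IsAlgL f) : IsAlgL g := by
  have hg : g.order = -1 :=
    order_eq_of_coeff_ne_zero (by simp [hg1]) fun n hn => hg0 n (by omega) (by omega)
  have hu1 : (g⁻¹).order = 1 := by
    rw [← zpow_neg_one, order_zpow (ne_zero_of_order_ne_zero (by simp [hg])), hg]
    norm_num
  have hu : 0 < (g⁻¹).order := by simp [hu1]
  refine halg.of_algHom (subst g⁻¹ hu) ?_ ?_
  · rw [zL, subst_single_one, zpow_neg_one, inv_inv]
  · rw [← hcomp]
    ext m
    exact coeff_subst hu hu1 (fun n hn => hf0 n (by omega) (by omega)) m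

/-- if `f, g ∈ z + (1/z)ℂ[[1/z]]` satisfy `f ∘ g = z` and `f` is
algebraic over `ℂ(z)`, then `g` is algebraic over `ℂ(z)`. -/
theorem inverse_composition_algebraic (f g : LaurentSeries ℂ)
    (hf1 : f.coeff (-1) = 1) (hf0 : ∀ n : ℤ, n ≤ 0 → n ≠ -1 → f.coeff n = 0)
    (hg1 : g.coeff (-1) = 1) (hg0 : ∀ n : ℤ, n ≤ 0 → n ≠ -1 → g.coeff n = 0)
    (hcomp : compL f g = zL) (halg : IsAlgL f) : IsAlgL g :=
  inverse_composition_algebraic_general f g hf0 hg1 hg0 hcomp halg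
end

section
/- Let K₀ ⊆ K be a field extension, f = (f₁,…,fₙ) an n-tuple of polynomials in K₀[x₁,…,xₙ], J the determinant of the Jacobian matrix (∂fᵢ/∂xⱼ), and α ∈ Kⁿ a point with f(α) = 0 and J(α) ≠ 0. Then every coordinate of α is algebraic over K₀. -/
open MvPolynomial

/-!
Let `L = K₀(α)`. Applying `d : L → Ω[L⁄K₀]` to `f_i(α) = 0` gives the linear system
`∑ⱼ ∂f_i/∂x_j(α) dα_j = 0`, whose matrix is invertible, so every `dα_j` vanishes; as the `α_j`
generate `L`, `Ω[L⁄K₀] = 0`. A finitely generated field extension with no Kähler differentials is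
formally unramified, hence separable and in particular algebraic.
-/

theorem Derivation.map_aeval_eq_sum_pderiv {R A M σ : Type*} [CommSemiring R] [CommSemiring A]
    [Algebra R A] [AddCommMonoid M] [Module A M] [Module R M] [Fintype σ]
    (D : Derivation R A M) (x : σ → A) (p : MvPolynomial σ R) :
    D (aeval x p) = ∑ j, aeval x (pderiv j p) • D (x j) := by
  classical
  induction p using MvPolynomial.induction_on with
  | C r => simp
  | add p q hp hq => simp only [map_add, hp, hq, add_smul, Finset.sum_add_distrib]
  | mul_X p i hp =>
    simp only [Derivation.leibniz, map_mul, aeval_X, pderiv_X, hp]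
    simp [Pi.single_apply, apply_ite (aeval x), ite_smul, add_smul, Finset.sum_add_distrib,
      mul_smul, Finset.smul_sum]

theorem Matrix.eq_zero_of_forall_sum_smul_eq_zero {R M ι : Type*} [CommRing R] [AddCommGroup M]
    [Module R M] [Fintype ι] [DecidableEq ι] (A : Matrix ι ι R) (hA : IsUnit A.det) (v : ι → M)
    (hv : ∀ i, ∑ j, A i j • v j = 0) : v = 0 := by
  funext k
  calc v k = ∑ j, (A⁻¹ * A) k j • v j := by
        simp [Matrix.nonsing_inv_mul A hA, Matrix.one_apply]
    _ = ∑ i, A⁻¹ k i • ∑ j, A i j • v j := by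
        simp only [Matrix.mul_apply, Finset.sum_smul, Finset.smul_sum, mul_smul]
        exact Finset.sum_comm
    _ = 0 := by simp [hv]

theorem Derivation.map_eq_zero_of_isUnit_jacobian {R A M σ : Type*} [CommRing R] [CommRing A]
    [Algebra R A] [AddCommGroup M] [Module A M] [Module R M] [Fintype σ] [DecidableEq σ]
    (D : Derivation R A M) (f : σ → MvPolynomial σ R) (x : σ → A)
    (hf : ∀ i, aeval x (f i) = 0)
    (hJ : IsUnit (aeval x (Matrix.of fun i j => pderiv j (f i)).det)) (j : σ) :
    D (x j) = 0 := by
  have hJ' : IsUnit ((Matrix.of fun i j => pderiv j (f i)).map (aeval x)).det := by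
    rwa [AlgHom.map_det] at hJ
  refine congrFun (Matrix.eq_zero_of_forall_sum_smul_eq_zero _ hJ' (fun j => D (x j))
    fun i => ?_) j
  simpa [hf i] using (D.map_aeval_eq_sum_pderiv x (f i)).symm

theorem Derivation.eq_zero_of_mem_adjoin {F E M : Type*} [Field F] [Field E] [Algebra F E]
    [AddCommGroup M] [Module E M] [Module F M] (D : Derivation F E M)
    {S : Set E} (hS : ∀ s ∈ S, D s = 0) {y : E} (hy : y ∈ IntermediateField.adjoin F S) :
    D y = 0 := by
  have hAlg : ∀ z ∈ Algebra.adjoin F S, D z = 0 := fun z hz => D.eqOn_adjoin (D2 := 0) hS hz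
  obtain ⟨r, hr, s, hs, rfl⟩ := IntermediateField.mem_adjoin_iff_div.1 hy
  simp [Derivation.leibniz_div, hAlg r hr, hAlg s hs]

theorem KaehlerDifferential.subsingleton_of_adjoin_eq_top {F E : Type*} [Field F] [Field E]
    [Algebra F E] {S : Set E} (hS : IntermediateField.adjoin F S = ⊤)
    (hD : ∀ s ∈ S, D F E s = 0) : Subsingleton Ω[E⁄F] := by
  suffices (⊤ : Submodule E Ω[E⁄F]) ≤ ⊥ from
    (subsingleton_iff_forall_eq 0).mpr fun ω => this trivial
  rw [← KaehlerDifferential.span_range_derivation, Submodule.span_le]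
  rintro _ ⟨y, rfl⟩
  exact (D F E).eq_zero_of_mem_adjoin hD (hS ▸ trivial)

theorem Algebra.IsAlgebraic.of_subsingleton_kaehlerDifferential (F E : Type*) [Field F] [Field E]
    [Algebra F E] [EssFiniteType F E] [Subsingleton Ω[E⁄F]] : Algebra.IsAlgebraic F E :=
  have : FormallyUnramified F E := ⟨‹_›⟩
  (FormallyUnramified.isSeparable F E).isAlgebraic

theorem Algebra.IsAlgebraic.of_jacobian_ne_zero {F E σ : Type*} [Field F] [Field E] [Algebra F E]
    [Fintype σ] [DecidableEq σ] (f : σ → MvPolynomial σ F) (x : σ → E)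
    (hx : IntermediateField.adjoin F (Set.range x) = ⊤) (hf : ∀ i, aeval x (f i) = 0)
    (hJ : aeval x (Matrix.of fun i j => pderiv j (f i)).det ≠ 0) : Algebra.IsAlgebraic F E := by
  have : EssFiniteType F E := by
    rw [← IntermediateField.fg_top_iff, ← hx]
    exact IntermediateField.fg_adjoin_of_finite (Set.finite_range x)
  have : Subsingleton Ω[E⁄F] := KaehlerDifferential.subsingleton_of_adjoin_eq_top hx <| by
    rintro _ ⟨j, rfl⟩
    exact (KaehlerDifferential.D F E).map_eq_zero_of_isUnit_jacobian f x hf hJ.isUnit j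
  exact .of_subsingleton_kaehlerDifferential F E

/-- if `f : (Fin n) → K₀[x₁,…,xₙ]` vanishes at `α ∈ Kⁿ` while the
Jacobian determinant does not, then every coordinate of `α` is algebraic over `K₀`. -/
theorem algebraicity_criterion {K₀ K : Type*} [Field K₀] [Field K] [Algebra K₀ K]
    {n : ℕ} (f : Fin n → MvPolynomial (Fin n) K₀) (α : Fin n → K)
    (hzero : ∀ i, MvPolynomial.aeval α (f i) = 0)
    (hJac : MvPolynomial.aeval α
      (Matrix.det (Matrix.of fun i j => MvPolynomial.pderiv j (f i))) ≠ 0) :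
    ∀ i, IsAlgebraic K₀ (α i) := by
  set L := IntermediateField.adjoin K₀ (Set.range α)
  let β : Fin n → L := fun j => ⟨α j, IntermediateField.subset_adjoin _ _ ⟨j, rfl⟩⟩
  have hβ (p : MvPolynomial (Fin n) K₀) : algebraMap L K (aeval β p) = aeval α p :=
    (aeval_algebraMap_apply K β p).symm
  have hgen : IntermediateField.adjoin K₀ (Set.range β) = ⊤ := by
    apply IntermediateField.lift_injective L
    rw [IntermediateField.lift_adjoin, IntermediateField.lift_top, ← Set.range_comp]
    rfl
  have : Algebra.IsAlgebraic K₀ L := .of_jacobian_ne_zero f β hgen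
    (fun i => FaithfulSMul.algebraMap_injective L K (by rw [hβ, hzero i, map_zero]))
    (fun h => hJac (by rw [← hβ, h, map_zero]))
  exact fun i => (Algebra.IsAlgebraic.isAlgebraic (β i)).algebraMap
end

section
/- Let A be an n×n matrix over ℂ((1/z)). Then the following are equivalent: (i) every coefficient eᵢ(A) of the characteristic polynomial of A lies in (1/z)ℂ[[1/z]] (i.e., has strictly negative valuation); (ii) val(A^k) → −∞ as k → ∞; (iii) every eigenvalue of A in the algebraic closure of ℂ((1/z)) has strictly negative valuation. -/
/-!
(i) ⇒ (ii): by Cayley–Hamilton, `A ^ (m + n)` is a combination of `A ^ m, …, A ^ (m + n - 1)`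
whose coefficients `eᵢ(A)` have negative valuation, so the valuation of the entries of `A ^ k`
drops by at least one every `n` steps.

(ii) ⇒ (iii): if `A x = λ x` and all entries of `A ^ k` have negative valuation, then in
`A ^ k x = λ ^ k x` the coordinate of `x` of largest valuation gets strictly smaller on the
left, which is impossible unless `val λ < 0`.

(iii) ⇒ (i): by Vieta, each `eᵢ(A)` is an elementary symmetric function of the eigenvalues, a
sum of nonempty products of elements of negative valuation.
-/

open Polynomial Finset

/-- The paper's `val`, ordered like a degree: the opposite convention to `AddValuation`. -/
structure IsDegreeValuation {K : Type*} [Field K] (v : K → WithBot ℚ) : Prop where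
  eq_bot_iff : ∀ x, v x = ⊥ ↔ x = 0
  map_mul : ∀ x y, v (x * y) = v x + v y
  map_add_le_max : ∀ x y, v (x + y) ≤ max (v x) (v y)

namespace IsDegreeValuation

variable {K : Type*} [Field K] {v : K → WithBot ℚ}

theorem map_zero (hv : IsDegreeValuation v) : v 0 = ⊥ := (hv.eq_bot_iff 0).2 rfl

theorem ne_bot (hv : IsDegreeValuation v) {x : K} (hx : x ≠ 0) : v x ≠ ⊥ :=
  mt (hv.eq_bot_iff x).1 hx

theorem map_one (hv : IsDegreeValuation v) : v 1 = 0 := by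
  have h := hv.map_mul 1 1
  rw [one_mul] at h
  lift v 1 to ℚ using hv.ne_bot one_ne_zero with q
  norm_cast at h ⊢
  linarith

theorem map_neg (hv : IsDegreeValuation v) (x : K) : v (-x) = v x := by
  have h := hv.map_mul (-1) (-1)
  rw [neg_mul_neg, one_mul, hv.map_one] at h
  lift v (-1) to ℚ using hv.ne_bot (neg_ne_zero.2 one_ne_zero) with q hq
  have hq0 : q = 0 := by norm_cast at h; linarith
  rw [neg_eq_neg_one_mul, hv.map_mul, ← hq, hq0, WithBot.coe_zero, zero_add]

theorem map_neg_one_pow (hv : IsDegreeValuation v) (j : ℕ) : v ((-1) ^ j) = 0 := by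
  rcases neg_one_pow_eq_or K j with h | h <;> simp only [h, hv.map_neg, hv.map_one]

theorem map_pow_nonneg (hv : IsDegreeValuation v) {x : K} (hx : 0 ≤ v x) (k : ℕ) :
    0 ≤ v (x ^ k) := by
  induction k with
  | zero => rw [pow_zero, hv.map_one]
  | succ k ih => rw [pow_succ, hv.map_mul]; exact add_nonneg ih hx

theorem multiset_sum_lt (hv : IsDegreeValuation v) {s : Multiset K} {c : WithBot ℚ}
    (hc : c ≠ ⊥) (h : ∀ x ∈ s, v x < c) : v s.sum < c := by
  induction s using Multiset.induction_on with
  | empty => rw [Multiset.sum_zero, hv.map_zero]; exact bot_lt_iff_ne_bot.2 hc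
  | cons a s ih =>
    rw [Multiset.sum_cons]
    exact (hv.map_add_le_max _ _).trans_lt (max_lt (h a (Multiset.mem_cons_self a s))
      (ih fun x hx => h x (Multiset.mem_cons_of_mem hx)))

theorem sum_lt (hv : IsDegreeValuation v) {ι : Type*} {s : Finset ι} {f : ι → K}
    {c : WithBot ℚ} (hc : c ≠ ⊥) (h : ∀ i ∈ s, v (f i) < c) : v (∑ i ∈ s, f i) < c :=
  hv.multiset_sum_lt hc <| by simpa using h

theorem multiset_prod_le_zero (hv : IsDegreeValuation v) {s : Multiset K}
    (h : ∀ x ∈ s, v x ≤ 0) : v s.prod ≤ 0 := by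
  induction s using Multiset.induction_on with
  | empty => rw [Multiset.prod_zero, hv.map_one]
  | cons a s ih =>
    rw [Multiset.prod_cons, hv.map_mul]
    exact add_nonpos (h a (Multiset.mem_cons_self a s))
      (ih fun x hx => h x (Multiset.mem_cons_of_mem hx))

theorem multiset_prod_lt_zero (hv : IsDegreeValuation v) {s : Multiset K} (hs : s ≠ 0)
    (h : ∀ x ∈ s, v x < 0) : v s.prod < 0 := by
  obtain ⟨a, ha⟩ := Multiset.exists_mem_of_ne_zero hs
  obtain ⟨t, rfl⟩ := Multiset.exists_cons_of_mem ha
  rw [Multiset.prod_cons, hv.map_mul]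
  exact Left.add_neg_of_neg_of_nonpos (h a (Multiset.mem_cons_self a t))
    (hv.multiset_prod_le_zero fun x hx => (h x (Multiset.mem_cons_of_mem hx)).le)

theorem esymm_lt_zero (hv : IsDegreeValuation v) {s : Multiset K} (h : ∀ x ∈ s, v x < 0)
    {j : ℕ} (hj : 0 < j) : v (s.esymm j) < 0 := by
  refine hv.multiset_sum_lt WithBot.coe_ne_bot fun x hx => ?_
  obtain ⟨t, ht, rfl⟩ := Multiset.mem_map.1 hx
  obtain ⟨hts, htj⟩ := Multiset.mem_powersetCard.1 ht
  refine hv.multiset_prod_lt_zero ?_ fun x hx => h x (Multiset.mem_of_le hts hx)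
  rintro rfl
  rw [Multiset.card_zero] at htj
  omega

theorem coeff_lt_zero_of_forall_mem_roots (hv : IsDegreeValuation v) {p : K[X]} (hp : p.Monic)
    (hsplit : p.Splits) (hroots : ∀ r ∈ p.roots, v r < 0) {i : ℕ} (hi : i < p.natDegree) :
    v (p.coeff i) < 0 := by
  rw [coeff_eq_esymm_roots_of_splits hsplit hi.le, hp.leadingCoeff, one_mul, hv.map_mul,
    hv.map_neg_one_pow, zero_add]
  exact hv.esymm_lt_zero hroots (by omega)

theorem lt_zero_of_hasEigenvalue (hv : IsDegreeValuation v) {ι : Type*} [Fintype ι]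
    [DecidableEq ι] {B : Matrix ι ι K} {k : ℕ} (hk : ∀ i j, v ((B ^ k) i j) < 0) {μ : K}
    (hμ : Module.End.HasEigenvalue (Matrix.toLin' B) μ) : v μ < 0 := by
  obtain ⟨x, hx⟩ := hμ.exists_hasEigenvector
  obtain ⟨j, hj⟩ := Function.ne_iff.1 hx.2
  have : Nonempty ι := ⟨j⟩
  obtain ⟨i, hi⟩ := Finite.exists_max fun i => v (x i)
  have hxi : v (x i) ≠ ⊥ := ne_bot_of_le_ne_bot (hv.ne_bot hj) (hi j)
  have heigen : (B ^ k).mulVec x = μ ^ k • x := by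
    simpa only [← Matrix.toLin'_pow, Matrix.toLin'_apply] using hx.pow_apply k
  by_contra! hμ0
  have hlower : v (x i) ≤ v (((B ^ k).mulVec x) i) := by
    rw [heigen, Pi.smul_apply, smul_eq_mul, hv.map_mul]
    exact le_add_of_nonneg_left (hv.map_pow_nonneg hμ0 k)
  have hupper : v (((B ^ k).mulVec x) i) < v (x i) := by
    refine hv.sum_lt hxi fun l _ => ?_
    rw [hv.map_mul]
    calc v ((B ^ k) i l) + v (x l) ≤ v ((B ^ k) i l) + v (x i) := add_le_add le_rfl (hi l)
      _ < 0 + v (x i) := (WithBot.add_lt_add_iff_right hxi).2 (hk i l)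
      _ = v (x i) := zero_add _
  exact hupper.not_ge hlower

theorem algebraMap_lt_zero_iff {R L : Type*} [Field R] [Field L] [Algebra (LaurentSeries R) L]
    {v : L → WithBot ℚ} (hv : IsDegreeValuation v)
    (hext : ∀ f : LaurentSeries R, f ≠ 0 →
      v (algebraMap (LaurentSeries R) L f) = ((-(f.order) : ℚ) : WithBot ℚ))
    (f : LaurentSeries R) :
    v (algebraMap (LaurentSeries R) L f) < 0 ↔ ∀ m ≤ 0, f.coeff m = 0 := by
  rcases eq_or_ne f 0 with rfl | hf
  · simp [hv.map_zero]
  have hcoeff : (∀ m ≤ 0, f.coeff m = 0) ↔ 0 < f.order := by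
    rw [← Order.one_le_iff_pos, HahnSeries.le_order_iff_forall hf]
    exact forall_congr' fun m => imp_congr_left (by omega)
  rw [hcoeff, hext f hf, WithBot.coe_lt_zero, neg_lt_zero, Int.cast_pos]

end IsDegreeValuation

namespace Matrix

variable {R ι : Type*} [CommRing R] [Nontrivial R] [Fintype ι] [DecidableEq ι]

theorem pow_add_card_eq_neg_sum (A : Matrix ι ι R) (m : ℕ) :
    A ^ (m + Fintype.card ι) =
      -∑ i ∈ range (Fintype.card ι), A.charpoly.coeff i • A ^ (m + i) := by
  have hCH := A.aeval_self_charpoly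
  rw [A.charpoly_monic.as_sum, charpoly_natDegree_eq_dim] at hCH
  simp only [map_add, map_pow, map_sum, map_mul, aeval_X, aeval_C, ← Algebra.smul_def] at hCH
  rw [eq_neg_iff_add_eq_zero, pow_add, ← mul_zero (A ^ m), ← hCH, mul_add, mul_sum]
  simp only [mul_smul_comm, ← pow_add]

variable (w : AddValuation R (WithTop ℤ))

theorem add_div_card_le_addValuation_pow_apply (A : Matrix ι ι R)
    (hc : ∀ i < Fintype.card ι, 1 ≤ w (A.charpoly.coeff i)) {N : ℤ}
    (hN : ∀ r < Fintype.card ι, ∀ i j, (N : WithTop ℤ) ≤ w ((A ^ r) i j))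
    (k : ℕ) (i j : ι) :
    ((N + (k / Fintype.card ι : ℕ) : ℤ) : WithTop ℤ) ≤ w ((A ^ k) i j) := by
  induction k using Nat.strong_induction_on generalizing i j with
  | _ k ih =>
  rcases lt_or_ge k (Fintype.card ι) with hk | hk
  · simpa [Nat.div_eq_of_lt hk] using hN k hk i j
  obtain ⟨m, rfl⟩ := Nat.exists_eq_add_of_le' hk
  rw [pow_add_card_eq_neg_sum, neg_apply, AddValuation.map_neg, sum_apply]
  refine w.map_le_sum fun l hl => ?_
  rw [smul_apply, smul_eq_mul, w.map_mul]
  have hl : l < Fintype.card ι := mem_range.1 hl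
  have hdiv : (m + Fintype.card ι) / Fintype.card ι ≤ (m + l) / Fintype.card ι + 1 := by
    rw [Nat.add_div_right _ (by omega)]
    exact Nat.add_le_add_right (Nat.div_le_div_right (by omega)) 1
  calc ((N + ((m + Fintype.card ι) / Fintype.card ι : ℕ) : ℤ) : WithTop ℤ)
      ≤ ((1 + (N + ((m + l) / Fintype.card ι : ℕ)) : ℤ) : WithTop ℤ) :=
        WithTop.coe_le_coe.2 (by omega)
    _ = 1 + ((N + ((m + l) / Fintype.card ι : ℕ) : ℤ) : WithTop ℤ) := rfl
    _ ≤ _ := add_le_add (hc l hl) (ih (m + l) (by omega) i j)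

theorem exists_forall_le_addValuation_pow_apply (A : Matrix ι ι R)
    (hc : ∀ i < Fintype.card ι, 1 ≤ w (A.charpoly.coeff i)) (M : ℤ) :
    ∃ k₀ : ℕ, ∀ k ≥ k₀, ∀ i j, (M : WithTop ℤ) ≤ w ((A ^ k) i j) := by
  obtain ⟨b, hb⟩ := Finite.bddBelow_range
    fun p : Fin (Fintype.card ι) × ι × ι => w ((A ^ (p.1 : ℕ)) p.2.1 p.2.2)
  have hN (r : ℕ) (hr : r < Fintype.card ι) (i j : ι) :
      ((b.untopD 0 : ℤ) : WithTop ℤ) ≤ w ((A ^ r) i j) :=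
    (WithTop.coe_untopD_le b 0).trans (hb ⟨(⟨r, hr⟩, i, j), rfl⟩)
  refine ⟨Fintype.card ι * (M - b.untopD 0).toNat, fun k hk i j =>
    le_trans ?_ (add_div_card_le_addValuation_pow_apply w A hc hN k i j)⟩
  have : Nonempty ι := ⟨i⟩
  have hq : (M - b.untopD 0).toNat ≤ k / Fintype.card ι :=
    (Nat.le_div_iff_mul_le Fintype.card_pos).2 (by rw [mul_comm]; exact hk)
  exact WithTop.coe_le_coe.2 (by omega)

end Matrix

theorem LaurentSeries.coe_le_addVal_iff {R : Type*} [Field R] (f : LaurentSeries R) (M : ℤ) :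
    (M : WithTop ℤ) ≤ HahnSeries.addVal ℤ R f ↔ ∀ m < M, f.coeff m = 0 := by
  simp [HahnSeries.addVal_apply, HahnSeries.le_orderTop_iff_forall]

/-- for an `n×n` matrix `A` over `ℂ((1/z))` (modeled as the Laurent
series field in `T = 1/z`, so `val f = -f.order`), the following are equivalent:
(i) all non-leading coefficients of the characteristic polynomial of `A` lie in
`(1/z)ℂ[[1/z]]` (only `Tᵐ`, `m ≥ 1`, occurs);
(ii) `val (A^k) → -∞` as `k → ∞`;
(iii) every eigenvalue of `A` in the algebraic closure has strictly negative
valuation, for a valuation `v` on the algebraic closure extending `val`. -/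
theorem negative_spectral_valuation_tfae
    (n : ℕ) (A : Matrix (Fin n) (Fin n) (LaurentSeries ℂ))
    (v : AlgebraicClosure (LaurentSeries ℂ) → WithBot ℚ)
    (hv0 : ∀ x, v x = ⊥ ↔ x = 0)
    (hvmul : ∀ x y, v (x * y) = v x + v y)
    (hvadd : ∀ x y, v (x + y) ≤ max (v x) (v y))
    (hvext : ∀ f : LaurentSeries ℂ, f ≠ 0 →
      v (algebraMap (LaurentSeries ℂ) (AlgebraicClosure (LaurentSeries ℂ)) f)
        = ((-(f.order) : ℚ) : WithBot ℚ)) :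
    List.TFAE
      [ ∀ i < n, ∀ m : ℤ, m ≤ 0 → ((Matrix.charpoly A).coeff i).coeff m = 0,
        ∀ M : ℤ, ∃ k₀ : ℕ, ∀ k ≥ k₀, ∀ i j : Fin n, ∀ m : ℤ, m < M →
          ((A ^ k) i j).coeff m = 0,
        ∀ lam : AlgebraicClosure (LaurentSeries ℂ),
          Polynomial.aeval lam (Matrix.charpoly A) = 0 → v lam < 0 ] := by
  have hv : IsDegreeValuation v := ⟨hv0, hvmul, hvadd⟩
  set φ := algebraMap (LaurentSeries ℂ) (AlgebraicClosure (LaurentSeries ℂ))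
  have hcharpoly : (A.map φ).charpoly = A.charpoly.map φ := A.charpoly_map φ
  tfae_have 1 → 2 := fun h1 M => by
    obtain ⟨k₀, hk₀⟩ :=
      A.exists_forall_le_addValuation_pow_apply (HahnSeries.addVal ℤ ℂ)
      (fun i hi => (LaurentSeries.coe_le_addVal_iff _ 1).2
        fun m hm => h1 i (by simpa using hi) m (by omega)) M
    exact ⟨k₀, fun k hk i j => (LaurentSeries.coe_le_addVal_iff _ M).1 (hk₀ k hk i j)⟩
  tfae_have 2 → 3 := fun h2 lam hlam => by
    obtain ⟨k, hk⟩ := h2 1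
    refine hv.lt_zero_of_hasEigenvalue (B := A.map φ) (k := k) (fun i j => ?_) ?_
    · rw [← Matrix.map_pow, Matrix.map_apply, hv.algebraMap_lt_zero_iff hvext]
      exact fun m hm => hk k le_rfl i j m (by omega)
    · rw [Module.End.hasEigenvalue_iff_isRoot_charpoly, Matrix.charpoly_toLin', hcharpoly,
        IsRoot, eval_map_algebraMap]
      exact hlam
  tfae_have 3 → 1 := fun h3 i hi => by
    rw [← hv.algebraMap_lt_zero_iff hvext, ← coeff_map, ← hcharpoly]
    refine hv.coeff_lt_zero_of_forall_mem_roots (A.map φ).charpoly_monic (IsAlgClosed.splits _)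
      (fun r hr => h3 r ?_) (by simpa [Matrix.charpoly_natDegree_eq_dim] using hi)
    rw [hcharpoly, mem_roots_map_of_injective φ.injective A.charpoly_monic.ne_zero] at hr
    simpa [aeval_def] using hr
  tfae_finish
end

section
/- Let f(t) ∈ tℂ[[t]] be a power series with zero constant term and let F(x,y) ∈ ℂ[x,y] be a polynomial not divisible by x such that F(t, f(t)) = 0. Then F(1/z, y), viewed as a polynomial in y over ℂ((1/z)), has exactly one root of strictly negative valuation in the field of Newton–Puiseux series if and only if ∂F/∂y(0,0) ≠ 0. -/
/-!
Write `F(T, y) = ∑ₖ aₖ(T) yᵏ` with `aₖ ∈ ℂ[T]`. Each coefficient has valuation `≤ 0`, with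
equality exactly when `aₖ(0) ≠ 0`, so the least index at which the coefficient valuations reach
their maximum is the order `μ` of `F(0, y)` at `y = 0`. By the ultrametric inequality, multiplying
by `y - λ` raises that index by one when `v λ < 0` and keeps it otherwise; hence, over the algebraic
closure, `F(T, y)` has exactly `μ` roots of negative valuation. Finally `F(0, 0) = 0` because
`f(0) = 0`, and `F(0, y) ≠ 0` because `x ∤ F`, so `μ = 1` iff `∂F/∂y(0, 0) ≠ 0`.
-/

open Polynomial Polynomial.Bivariate
open scoped LaurentSeries PowerSeries

namespace Valuation

variable {K Γ₀ : Type*} [Field K] [LinearOrderedCommGroupWithZero Γ₀] (w : Valuation K Γ₀)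

def IsFirstDominantIndex (p : K[X]) (n : ℕ) : Prop :=
  (∀ k, w (p.coeff k) ≤ w (p.coeff n)) ∧ ∀ k < n, w (p.coeff k) < w (p.coeff n)

theorem map_coeff_mul_X_sub_C_zero (p : K[X]) (a : K) :
    w ((p * (X - C a)).coeff 0) = w (p.coeff 0) * w a := by
  simp [mul_coeff_zero]

variable {w} {p : K[X]} {m n : ℕ} {a : K}

theorem IsFirstDominantIndex.unique (hm : w.IsFirstDominantIndex p m)
    (hn : w.IsFirstDominantIndex p n) : m = n := by
  by_contra hne
  rcases Nat.lt_or_gt_of_ne hne with h | h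
  · exact (hn.2 m h).not_ge (hm.1 n)
  · exact (hm.2 n h).not_ge (hn.1 m)

theorem IsFirstDominantIndex.coeff_ne_zero (h : w.IsFirstDominantIndex p n) (hp : p ≠ 0) :
    p.coeff n ≠ 0 := by
  intro h0
  have := h.1 p.natDegree
  rw [h0, map_zero, le_zero_iff, zero_iff] at this
  exact leadingCoeff_ne_zero.2 hp this

theorem isFirstDominantIndex_C (c : K) : w.IsFirstDominantIndex (C c) 0 :=
  ⟨fun k => by cases k <;> simp, fun _ h => absurd h (Nat.not_lt_zero _)⟩

theorem IsFirstDominantIndex.mul_X_sub_C_of_lt_one (h : w.IsFirstDominantIndex p n)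
    (hn : p.coeff n ≠ 0) (ha : w a < 1) : w.IsFirstDominantIndex (p * (X - C a)) (n + 1) := by
  set S := w (p.coeff n)
  have hS : 0 < S := w.pos_iff.2 hn
  have hsmall : ∀ k, w (p.coeff k) * w a < S := fun k =>
    calc w (p.coeff k) * w a ≤ S * w a := mul_le_mul_left (h.1 k) _
      _ < S := mul_lt_of_lt_one_right hS ha
  have htop : w ((p * (X - C a)).coeff (n + 1)) = S := by
    rw [coeff_mul_X_sub_C, w.map_sub_eq_of_lt_left (map_mul w _ _ ▸ hsmall _)]
  rw [IsFirstDominantIndex, htop]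
  refine ⟨fun k => ?_, fun k hk => ?_⟩
  · rcases k with _ | k
    · exact ((w.map_coeff_mul_X_sub_C_zero p a).trans_lt (hsmall 0)).le
    · rw [coeff_mul_X_sub_C]
      exact w.map_sub_le (h.1 k) (map_mul w _ _ ▸ (hsmall _).le)
  · rcases k with _ | k
    · exact (w.map_coeff_mul_X_sub_C_zero p a).trans_lt (hsmall 0)
    · rw [coeff_mul_X_sub_C]
      exact w.map_sub_lt (h.2 k (Nat.lt_of_succ_lt_succ hk)) (map_mul w _ _ ▸ hsmall _)

theorem IsFirstDominantIndex.mul_X_sub_C_of_one_le (h : w.IsFirstDominantIndex p n)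
    (ha : 1 ≤ w a) : w.IsFirstDominantIndex (p * (X - C a)) n := by
  set S := w (p.coeff n)
  have ha0 : 0 < w a := zero_lt_one.trans_le ha
  have hle : ∀ k, w (p.coeff k) ≤ S * w a := fun k =>
    (h.1 k).trans (le_mul_of_one_le_right' ha)
  have hlt : ∀ k < n, w (p.coeff k) < S * w a := fun k hk =>
    (h.2 k hk).trans_le (le_mul_of_one_le_right' ha)
  have hmul_le : ∀ k, w (p.coeff k * a) ≤ S * w a := fun k =>
    (map_mul w _ _).trans_le (mul_le_mul_left (h.1 k) _)
  have hmul_lt : ∀ k < n, w (p.coeff k * a) < S * w a := fun k hk =>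
    (map_mul w _ _).trans_lt (mul_lt_mul_of_pos_right (h.2 k hk) ha0)
  have htop : w ((p * (X - C a)).coeff n) = S * w a := by
    rcases n with _ | n
    · exact w.map_coeff_mul_X_sub_C_zero p a
    · rw [coeff_mul_X_sub_C, w.map_sub_eq_of_lt_right, map_mul]
      exact (hlt n n.lt_succ_self).trans_eq (map_mul w _ _).symm
  rw [IsFirstDominantIndex, htop]
  refine ⟨fun k => ?_, fun k hk => ?_⟩
  · rcases k with _ | k
    · exact (w.map_coeff_mul_X_sub_C_zero p a).trans_le (mul_le_mul_left (h.1 0) _)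
    · rw [coeff_mul_X_sub_C]
      exact w.map_sub_le (hle k) (hmul_le _)
  · rcases k with _ | k
    · exact (w.map_coeff_mul_X_sub_C_zero p a).trans_lt (map_mul w _ _ ▸ hmul_lt 0 hk)
    · rw [coeff_mul_X_sub_C]
      exact w.map_sub_lt (hlt k (Nat.lt_of_succ_lt hk)) (hmul_lt _ hk)

theorem isFirstDominantIndex_C_mul_prod_X_sub_C {c : K} (hc : c ≠ 0) (s : Multiset K) :
    w.IsFirstDominantIndex (C c * (s.map fun a => X - C a).prod) (s.filter (w · < 1)).card := by
  induction s using Multiset.induction_on with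
  | empty => simpa using isFirstDominantIndex_C c
  | cons a s ih =>
    have hp : C c * (s.map fun a => X - C a).prod ≠ 0 :=
      mul_ne_zero (C_ne_zero.2 hc)
        (monic_multiset_prod_of_monic _ _ fun a _ => monic_X_sub_C a).ne_zero
    have hcons : C c * ((a ::ₘ s).map fun a => X - C a).prod
        = C c * (s.map fun a => X - C a).prod * (X - C a) := by
      rw [Multiset.map_cons, Multiset.prod_cons]; ring
    rw [hcons]
    by_cases ha : w a < 1
    · rw [Multiset.filter_cons_of_pos s ha, Multiset.card_cons]
      exact ih.mul_X_sub_C_of_lt_one (ih.coeff_ne_zero hp) ha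
    · rw [Multiset.filter_cons_of_neg s ha]
      exact ih.mul_X_sub_C_of_one_le (not_lt.1 ha)

theorem IsFirstDominantIndex.card_roots_filter_lt_one (h : w.IsFirstDominantIndex p n)
    (hp : p ≠ 0) (hsplit : p.Splits) : (p.roots.filter (w · < 1)).card = n := by
  have := isFirstDominantIndex_C_mul_prod_X_sub_C (w := w) (leadingCoeff_ne_zero.2 hp) p.roots
  rw [← hsplit.eq_prod_roots] at this
  exact this.unique h

variable (w) in
theorem card_roots_filter_lt_one_eq_natTrailingDegree {A B : Type*} [Semiring A] [Semiring B]
    (φ : A →+* K) (ψ : A →+* B) (hle : ∀ a, w (φ a) ≤ 1) (hone : ∀ a, w (φ a) = 1 ↔ ψ a ≠ 0)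
    {R : A[X]} (hR : R.map ψ ≠ 0) (hsplit : (R.map φ).Splits) :
    ((R.map φ).roots.filter (w · < 1)).card = (R.map ψ).natTrailingDegree := by
  set n := (R.map ψ).natTrailingDegree
  have hn : w ((R.map φ).coeff n) = 1 := by
    rw [coeff_map, hone, ← coeff_map]
    exact trailingCoeff_nonzero_iff_nonzero.2 hR
  have hdom : w.IsFirstDominantIndex (R.map φ) n := by
    refine ⟨fun k => hn ▸ coeff_map φ k ▸ hle _, fun k hk => hn ▸ ?_⟩
    refine lt_of_le_of_ne (coeff_map φ k ▸ hle _) ?_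
    rw [coeff_map, Ne, hone, not_not, ← coeff_map]
    exact coeff_eq_zero_of_lt_natTrailingDegree hk
  exact hdom.card_roots_filter_lt_one (fun h => by simp [h] at hn) hsplit

end Valuation

theorem WithBot.eq_zero_of_eq_add_self {Γ : Type*} [AddCancelMonoid Γ] {a : WithBot Γ}
    (ha : a ≠ ⊥) (h : a = a + a) : a = 0 := by
  lift a to Γ using ha
  norm_cast at h ⊢
  simpa using h

section
variable {K Γ : Type*} [Field K] [AddCommGroup Γ] [LinearOrder Γ] [IsOrderedAddMonoid Γ]

/-- An additively written `v` with `v (x + y) ≤ max (v x) (v y)` (a "`log |·|`", not an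
`AddValuation`) is a Mathlib `Valuation` through `WithBot Γ ≃ WithZero (Multiplicative Γ)`. -/
def Valuation.ofWithBot (v : K → WithBot Γ) (hv0 : ∀ x, v x = ⊥ ↔ x = 0)
    (hvmul : ∀ x y, v (x * y) = v x + v y) (hvadd : ∀ x y, v (x + y) ≤ max (v x) (v y)) :
    Valuation K (WithZero (Multiplicative Γ)) where
  toFun x := WithZero.toMulBot.symm (Multiplicative.ofAdd (v x))
  map_zero' := by rw [(hv0 0).2 rfl]; rfl
  map_one' := by
    have h11 := hvmul 1 1
    rw [mul_one] at h11
    rw [WithBot.eq_zero_of_eq_add_self (by simp [hv0]) h11]; rfl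
  map_mul' x y := by rw [hvmul]; rfl
  map_add_le_max' x y := hvadd x y

variable {v : K → WithBot Γ} {hv0 : ∀ x, v x = ⊥ ↔ x = 0}
    {hvmul : ∀ x y, v (x * y) = v x + v y} {hvadd : ∀ x y, v (x + y) ≤ max (v x) (v y)}

theorem Valuation.ofWithBot_lt_one_iff {x : K} :
    Valuation.ofWithBot v hv0 hvmul hvadd x < 1 ↔ v x < 0 := Iff.rfl

theorem Valuation.ofWithBot_le_one_iff {x : K} :
    Valuation.ofWithBot v hv0 hvmul hvadd x ≤ 1 ↔ v x ≤ 0 := Iff.rfl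

theorem Valuation.ofWithBot_eq_one_iff {x : K} :
    Valuation.ofWithBot v hv0 hvmul hvadd x = 1 ↔ v x = 0 := Iff.rfl

end

theorem PowerSeries.zero_le_order_coe {R : Type*} [Semiring R] (φ : R⟦X⟧) :
    0 ≤ (φ : R⸨X⸩).order := by
  by_contra! hneg
  have hφ : (φ : R⸨X⸩) ≠ 0 := fun h => by simp [h] at hneg
  exact hφ (HahnSeries.coeff_order_eq_zero.1 (by rw [PowerSeries.coeff_coe, if_pos hneg]))

theorem PowerSeries.order_coe_eq_zero_iff {R : Type*} [Semiring R] {φ : R⟦X⟧} (hφ : φ ≠ 0) :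
    (φ : R⸨X⸩).order = 0 ↔ constantCoeff φ ≠ 0 := by
  have hφ' : (φ : R⸨X⸩) ≠ 0 := (map_ne_zero_iff _ HahnSeries.ofPowerSeries_injective).2 hφ
  have hcoeff : (φ : R⸨X⸩).coeff 0 = constantCoeff φ := by
    simpa using PowerSeries.coeff_coe (R := R) φ 0
  refine ⟨fun h => ?_, fun h => le_antisymm ?_ (zero_le_order_coe φ)⟩
  · rw [← hcoeff, ← h]; exact HahnSeries.coeff_order_eq_zero.not.2 hφ'
  · exact HahnSeries.order_le_of_coeff_ne_zero (hcoeff ▸ h)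

section
variable {k L : Type*} [CommRing k] [Field L] [Algebra k⸨X⸩ L] {v : L → WithBot ℚ}

theorem apply_algebraMap_coe_le_zero (hv0 : ∀ x, v x = ⊥ ↔ x = 0)
    (hvext : ∀ g : k⸨X⸩, g ≠ 0 → v (algebraMap k⸨X⸩ L g) = ((-(g.order) : ℚ) : WithBot ℚ))
    (φ : k⟦X⟧) : v (algebraMap k⸨X⸩ L φ) ≤ 0 := by
  by_cases hφ : (φ : k⸨X⸩) = 0
  · simp [hφ, (hv0 0).2 rfl]
  · rw [hvext _ hφ]
    have := PowerSeries.zero_le_order_coe φ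
    exact_mod_cast (by simpa using this : (-((φ : k⸨X⸩).order : ℚ)) ≤ 0)

theorem apply_algebraMap_coe_eq_zero_iff (hv0 : ∀ x, v x = ⊥ ↔ x = 0)
    (hvext : ∀ g : k⸨X⸩, g ≠ 0 → v (algebraMap k⸨X⸩ L g) = ((-(g.order) : ℚ) : WithBot ℚ))
    (φ : k⟦X⟧) : v (algebraMap k⸨X⸩ L φ) = 0 ↔ PowerSeries.constantCoeff φ ≠ 0 := by
  by_cases hφ : φ = 0
  · simp [hφ, (hv0 0).2 rfl]
  · rw [hvext _ ((map_ne_zero_iff _ HahnSeries.ofPowerSeries_injective).2 hφ),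
      ← PowerSeries.order_coe_eq_zero_iff hφ]
    norm_cast
    simp

end

namespace Polynomial.Bivariate
variable {R : Type*} [CommRing R]

theorem eval_equivMvPolynomial (x y : R) (p : R[X][Y]) :
    MvPolynomial.eval ![x, y] (equivMvPolynomial R p) = p.evalEval x y := by
  induction p using Polynomial.induction_on' with
  | add p q hp hq => simp [hp, hq]
  | monomial n a =>
    induction a using Polynomial.induction_on' with
    | add p q hp hq => simp_all [map_add]
    | monomial m c =>
      simp_rw [← Polynomial.C_mul_X_pow_eq_monomial]
      simp [evalEval_C]

theorem X_zero_dvd_equivMvPolynomial {p : R[X][Y]} (h : p.map (evalRingHom 0) = 0) :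
    MvPolynomial.X 0 ∣ equivMvPolynomial R p := by
  have hC : C X ∣ p := (C_dvd_iff_dvd_coeff _ _).2 fun n => X_dvd_iff.2 <| by
    simpa [coeff_zero_eq_eval_zero] using congrArg (coeff · n) h
  simpa using _root_.map_dvd (equivMvPolynomial R) hC

end Polynomial.Bivariate

theorem aeval_eq_map_algebraMap_laurentSeries {k : Type*} [CommRing k]
    (F : MvPolynomial (Fin 2) k) :
    MvPolynomial.aeval ![C (HahnSeries.single (1 : ℤ) (1 : k)), X] F
      = ((equivMvPolynomial k).symm F).map (algebraMap k[X] k⸨X⸩) := by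
  have : (mapRingHom (algebraMap k[X] k⸨X⸩)).comp
        ((equivMvPolynomial k).symm : MvPolynomial (Fin 2) k →+* k[X][Y])
      = (MvPolynomial.aeval ![C (HahnSeries.single (1 : ℤ) (1 : k)), X]).toRingHom := by
    apply MvPolynomial.ringHom_ext
    · intro r
      simp [HahnSeries.algebraMap_apply', PowerSeries.algebraMap_apply']
    · intro i
      fin_cases i <;> simp
  exact (DFunLike.congr_fun this F).symm

theorem MvPolynomial.constantCoeff_aeval_powerSeries {σ R : Type*} [CommRing R]
    (g : σ → R⟦X⟧) (F : MvPolynomial σ R) :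
    PowerSeries.constantCoeff (aeval g F) = eval (fun i => PowerSeries.constantCoeff (g i)) F := by
  rw [MvPolynomial.map_aeval]
  simp

theorem Polynomial.natTrailingDegree_eq_one_iff {R : Type*} [Semiring R] {p : R[X]} (hp : p ≠ 0)
    (h0 : p.coeff 0 = 0) : p.natTrailingDegree = 1 ↔ p.coeff 1 ≠ 0 := by
  refine ⟨fun h => h ▸ trailingCoeff_nonzero_iff_nonzero.2 hp, fun h => ?_⟩
  have hle := natTrailingDegree_le_of_ne_zero h
  have hne : p.natTrailingDegree ≠ 0 := by simp [hp, h0]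
  omega

open scoped Classical in
/-- let `f(t) ∈ tℂ[[t]]` and `F(x,y) ∈ ℂ[x,y]` with `x ∤ F` and
`F(t, f(t)) = 0`.  Then `F(1/z, y)`, as a polynomial in `y` over `ℂ((1/z))`
(modeled as Laurent series in `T = 1/z`), has exactly one root of strictly negative
valuation (counted with multiplicity) in the algebraic closure — for any valuation `v`
extending `val = -order` — if and only if `∂F/∂y(0,0) ≠ 0`. -/
theorem one_negative_root_iff_nonsingular
    (f : PowerSeries ℂ) (hf : PowerSeries.constantCoeff (R := ℂ) f = 0)
    (F : MvPolynomial (Fin 2) ℂ)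
    (hFx : ¬ (MvPolynomial.X 0 ∣ F))
    (hFf : MvPolynomial.aeval ![PowerSeries.X, f] F = 0)
    (v : AlgebraicClosure (LaurentSeries ℂ) → WithBot ℚ)
    (hv0 : ∀ x, v x = ⊥ ↔ x = 0)
    (hvmul : ∀ x y, v (x * y) = v x + v y)
    (hvadd : ∀ x y, v (x + y) ≤ max (v x) (v y))
    (hvext : ∀ g : LaurentSeries ℂ, g ≠ 0 →
      v (algebraMap (LaurentSeries ℂ) (AlgebraicClosure (LaurentSeries ℂ)) g)
        = ((-(g.order) : ℚ) : WithBot ℚ)) :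
    (Multiset.card
      (Multiset.filter (fun lam => v lam < 0)
        (Polynomial.roots
          (Polynomial.map (algebraMap (LaurentSeries ℂ) (AlgebraicClosure (LaurentSeries ℂ)))
            (MvPolynomial.aeval
              ![Polynomial.C (HahnSeries.single (1 : ℤ) (1 : ℂ)), Polynomial.X] F)))) = 1)
    ↔ MvPolynomial.eval (fun _ => (0 : ℂ)) (MvPolynomial.pderiv 1 F) ≠ 0 := by
  obtain ⟨R, rfl⟩ := (equivMvPolynomial ℂ).surjective F
  have hval (p : ℂ[X][Y]) : MvPolynomial.eval (fun _ => 0) (equivMvPolynomial ℂ p)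
      = (p.map (evalRingHom 0)).coeff 0 := by
    rw [show (fun _ => (0 : ℂ)) = ![0, 0] by ext i; fin_cases i <;> rfl,
      eval_equivMvPolynomial, coeff_zero_eq_eval_zero, map_evalRingHom_eval]
  have hG0 : (R.map (evalRingHom 0)).coeff 0 = 0 := by
    have hF00 := congrArg PowerSeries.constantCoeff hFf
    rwa [MvPolynomial.constantCoeff_aeval_powerSeries, map_zero,
      show (fun i => PowerSeries.constantCoeff (![PowerSeries.X, f] i)) = fun _ => 0 by
        funext i; fin_cases i <;> simp [hf], hval] at hF00
  have hG1 : (R.map (evalRingHom 0)).coeff 1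
      = MvPolynomial.eval (fun _ => 0) (MvPolynomial.pderiv 1 (equivMvPolynomial ℂ R)) := by
    rw [pderiv_one_equivMvPolynomial, hval, ← derivative_map, coeff_derivative]
    simp
  have hG : R.map (evalRingHom 0) ≠ 0 := fun h => hFx (X_zero_dvd_equivMvPolynomial h)
  have hcard :=
    (Valuation.ofWithBot v hv0 hvmul hvadd).card_roots_filter_lt_one_eq_natTrailingDegree
    ((algebraMap ℂ⸨X⸩ (AlgebraicClosure ℂ⸨X⸩)).comp (algebraMap ℂ[X] ℂ⸨X⸩)) (evalRingHom 0)
    (fun p => Valuation.ofWithBot_le_one_iff.2 (apply_algebraMap_coe_le_zero hv0 hvext p))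
    (fun p => Valuation.ofWithBot_eq_one_iff.trans <|
      (apply_algebraMap_coe_eq_zero_iff hv0 hvext p).trans (by simp [coeff_zero_eq_eval_zero]))
    hG (IsAlgClosed.splits _)
  simp only [Valuation.ofWithBot_lt_one_iff] at hcard
  rw [aeval_eq_map_algebraMap_laurentSeries, AlgEquiv.symm_apply_apply, Polynomial.map_map, hcard,
    natTrailingDegree_eq_one_iff hG hG0, hG1]
end

section
/- Let f(t) = Σ_{i≥1} cᵢ tⁱ ∈ tℂ[[t]] be an algebraic power series (i.e., F(t, f(t)) = 0 for some nonzero F ∈ ℂ[x,y]). Then for all sufficiently large N, the shifted power series Σ_{i≥N} c_{i+N} tⁱ is nonsingular algebraic: it satisfies G(t, g(t)) = 0 for some G ∈ ℂ[x,y] with ∂G/∂y(0, g(0)) ≠ 0. -/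
/-!
Let `Q ∈ K[x][y]` be an annihilating polynomial of `f` of least degree; in characteristic zero
`w = Q_y(x, f)` is then nonzero, of some order `v`. For `N > v` write `f = p + x^N g` with `p`
the truncation of `f` below degree `2N` and `g` the shifted tail. The polynomial
`H(y) = Q(p + x^N y)` annihilates `g`, and its Taylor coefficients are `Q(p) ≡ Q(f) = 0`,
`x^N Q_y(p) ≡ x^N w` and multiples of `x^{2N}`, all modulo `x^{2N}`. Hence `H = x^{N+v} G`,
where `G(x, g) = 0` and `∂G/∂y(0, 0)` is the leading coefficient of `w`.
-/

open Polynomial Polynomial.Bivariate Filter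
open scoped PowerSeries

theorem IsAlgebraic.exists_aeval_eq_zero_aeval_derivative_ne_zero {R A : Type*}
    [CommRing R] [IsAddTorsionFree R] [CommRing A] [Algebra R A]
    (hinj : Function.Injective (algebraMap R A)) {a : A} (ha : IsAlgebraic R a) :
    ∃ Q : R[X], aeval a Q = 0 ∧ aeval a (derivative Q) ≠ 0 := by
  classical
  have hex : ∃ n, ∃ Q : R[X], Q ≠ 0 ∧ aeval a Q = 0 ∧ Q.natDegree = n :=
    let ⟨Q, hQ, haQ⟩ := ha
    ⟨_, Q, hQ, haQ, rfl⟩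
  obtain ⟨Q, hQ, haQ, hdeg⟩ := Nat.find_spec hex
  refine ⟨Q, haQ, fun haQ' => ?_⟩
  have hpos : Q.natDegree ≠ 0 := fun h => hQ <| by
    rw [eq_C_of_natDegree_eq_zero h, aeval_C, map_eq_zero_iff _ hinj] at haQ
    rw [eq_C_of_natDegree_eq_zero h, haQ, C_0]
  refine Nat.find_min hex (hdeg ▸ natDegree_derivative_lt hpos) ⟨_, ?_, haQ', rfl⟩
  exact mt derivative_eq_zero.1 hpos

theorem Polynomial.exists_comp_C_add_C_mul_X_eq_C_mul {R : Type*} [CommRing R] [IsDomain R]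
    (Q : R[X]) {p z d u : R} (hd : d ≠ 0) (h0 : d ∣ Q.eval p)
    (h1 : z * (derivative Q).eval p = d * u) (h2 : d ∣ z ^ 2) :
    ∃ G : R[X], Q.comp (C p + C z * X) = C d * G ∧ G.coeff 1 = u := by
  have hcoeff (k : ℕ) : (Q.comp (C p + C z * X)).coeff k = (taylor p Q).coeff k * z ^ k := by
    rw [← comp_C_mul_X_coeff, taylor_apply, comp_assoc, add_comp, X_comp, C_comp, add_comm]
  obtain ⟨G, hG⟩ : C d ∣ Q.comp (C p + C z * X) := by
    refine (C_dvd_iff_dvd_coeff _ _).2 fun k => ?_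
    rw [hcoeff]
    match k with
    | 0 => simpa using h0
    | 1 => simp [mul_comm _ z, h1]
    | k + 2 => exact (h2.trans (pow_dvd_pow z (by omega))).mul_left _
  refine ⟨G, hG, mul_left_cancel₀ hd ?_⟩
  rw [← coeff_C_mul, ← hG, hcoeff, taylor_coeff_one, pow_one, mul_comm, h1]

theorem Polynomial.sub_dvd_aeval_sub {R A : Type*} [CommSemiring R] [CommRing A] [Algebra R A]
    (a b : A) (P : R[X]) : a - b ∣ aeval a P - aeval b P := by
  simpa only [eval_map_algebraMap] using sub_dvd_eval_sub a b (P.map (algebraMap R A))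

theorem Polynomial.X_pow_dvd_coe_iff {R : Type*} [CommSemiring R] {P : R[X]} {m : ℕ} :
    PowerSeries.X ^ m ∣ (P : R⟦X⟧) ↔ X ^ m ∣ P := by
  simp [X_pow_dvd_iff, PowerSeries.X_pow_dvd_iff]

theorem Polynomial.exists_eq_X_pow_mul_of_X_pow_dvd_sub_coe {R : Type*} [CommRing R]
    {P : R[X]} {w : R⟦X⟧} {m v : ℕ} (hPw : PowerSeries.X ^ m ∣ w - (P : R⟦X⟧))
    (hw : w.order = v) (hvm : v < m) : ∃ u : R[X], P = X ^ v * u ∧ u.coeff 0 ≠ 0 := by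
  have hcoeff (i : ℕ) (hi : i < m) : P.coeff i = PowerSeries.coeff i w := by
    have := PowerSeries.X_pow_dvd_iff.1 hPw i hi
    rwa [map_sub, coeff_coe, sub_eq_zero, eq_comm] at this
  obtain ⟨hv, hlt⟩ := PowerSeries.order_eq_nat.1 hw
  obtain ⟨u, rfl⟩ : X ^ v ∣ P :=
    X_pow_dvd_iff.2 fun i hi => (hcoeff i (hi.trans hvm)).trans (hlt i hi)
  refine ⟨u, rfl, ?_⟩
  simpa [← hcoeff v hvm, coeff_X_pow_mul'] using hv

namespace PowerSeries

variable {R : Type*} [CommSemiring R]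

theorem algebraMap_polynomial_apply (p : R[X]) : algebraMap R[X] R⟦X⟧ p = p := by
  simp [algebraMap_apply']

noncomputable def tailShift (N : ℕ) (f : R⟦X⟧) : R⟦X⟧ :=
  mk fun i => if N ≤ i then coeff (i + N) f else 0

theorem X_pow_dvd_tailShift (N : ℕ) (f : R⟦X⟧) : X ^ N ∣ tailShift N f :=
  X_pow_dvd_iff.2 fun i hi => by simp [tailShift, hi.not_ge]

theorem constantCoeff_tailShift {N : ℕ} (hN : N ≠ 0) (f : R⟦X⟧) :
    constantCoeff (tailShift N f) = 0 :=
  X_dvd_iff.1 ((dvd_pow_self X hN).trans (X_pow_dvd_tailShift N f))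

theorem trunc_add_X_pow_mul_tailShift (N : ℕ) (f : R⟦X⟧) :
    (trunc (2 * N) f : R⟦X⟧) + X ^ N * tailShift N f = f := by
  ext k
  rw [map_add, Polynomial.coeff_coe, coeff_trunc, coeff_X_pow_mul', tailShift, coeff_mk]
  split_ifs <;> first | omega | simp [Nat.sub_add_cancel, *]

theorem aeval_X_equivMvPolynomial (y : R⟦X⟧) (G : R[X][Y]) :
    MvPolynomial.aeval ![X, y] (equivMvPolynomial R G) = Polynomial.aeval y G := by
  have hX : (MvPolynomial.aeval ![X, y]).comp (equivMvPolynomial R).toAlgHom =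
      (Polynomial.aeval y).restrictScalars R := by
    ext <;> simp [algebraMap_polynomial_apply]
  exact AlgHom.congr_fun hX G

end PowerSeries

theorem Polynomial.Bivariate.eval_zero_pderiv_one_equivMvPolynomial {R : Type*} [CommRing R]
    (G : R[X][Y]) :
    MvPolynomial.eval ![0, 0] (MvPolynomial.pderiv 1 (equivMvPolynomial R G)) =
      (G.coeff 1).coeff 0 := by
  have hev : (MvPolynomial.aeval ![(0 : R), 0]).comp (equivMvPolynomial R).toAlgHom =
      aevalAeval 0 0 := by
    ext <;> simp
  rw [pderiv_one_equivMvPolynomial, ← MvPolynomial.aeval_eq_eval, ← AlgEquiv.coe_toAlgHom,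
    ← AlgHom.comp_apply, hev, coe_aevalAeval_eq_evalEval]
  simp [evalEval, ← coeff_zero_eq_eval_zero, coeff_derivative]

theorem IsAlgebraic.eventually_exists_aeval_tailShift_eq_zero {K : Type*} [CommRing K]
    [IsDomain K] [CharZero K] {f : K⟦X⟧} (hf : IsAlgebraic K[X] f) :
    ∀ᶠ N in atTop, ∃ G : K[X][Y],
      aeval (PowerSeries.tailShift N f) G = 0 ∧ (G.coeff 1).coeff 0 ≠ 0 := by
  obtain ⟨Q, hQ, hQ'⟩ := hf.exists_aeval_eq_zero_aeval_derivative_ne_zero fun p q h =>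
    Polynomial.coe_injective K (by simpa only [PowerSeries.algebraMap_polynomial_apply] using h)
  set w := aeval f (derivative Q)
  set v := w.order.toNat
  have hw : w.order = v := (ENat.natCast_toNat (PowerSeries.order_eq_top.not.2 hQ')).symm
  filter_upwards [eventually_gt_atTop v] with N hvN
  set p := PowerSeries.trunc (2 * N) f
  have hsplit : (p : K⟦X⟧) + PowerSeries.X ^ N * PowerSeries.tailShift N f = f :=
    PowerSeries.trunc_add_X_pow_mul_tailShift N f
  have hcongr (P : K[X][Y]) :
      PowerSeries.X ^ (2 * N) ∣ aeval f P - ((P.eval p : K[X]) : K⟦X⟧) := by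
    have hfp : PowerSeries.X ^ (2 * N) ∣ f - (p : K⟦X⟧) := by
      rw [← hsplit, add_sub_cancel_left, two_mul, pow_add]
      exact mul_dvd_mul_left _ (PowerSeries.X_pow_dvd_tailShift N f)
    simpa only [← PowerSeries.algebraMap_polynomial_apply,
      aeval_algebraMap_apply_eq_algebraMap_eval] using hfp.trans (sub_dvd_aeval_sub f p P)
  have hQp : X ^ (N + v) ∣ Q.eval p := by
    have := hcongr Q
    rw [hQ, zero_sub, dvd_neg, X_pow_dvd_coe_iff] at this
    exact (pow_dvd_pow X (by omega)).trans this
  obtain ⟨u, hu, hu0⟩ := exists_eq_X_pow_mul_of_X_pow_dvd_sub_coe (hcongr (derivative Q)) hw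
    (by omega)
  obtain ⟨G, hG, rfl⟩ := Q.exists_comp_C_add_C_mul_X_eq_C_mul (z := X ^ N) (u := u)
    (pow_ne_zero _ X_ne_zero) hQp (by rw [hu]; ring)
    (by rw [← pow_mul]; exact pow_dvd_pow _ (by omega))
  refine ⟨G, ?_, hu0⟩
  have hH : aeval (PowerSeries.tailShift N f) (Q.comp (C p + C (X ^ N) * X)) = 0 := by
    rw [aeval_comp]
    simpa [PowerSeries.algebraMap_polynomial_apply, hsplit] using hQ
  rw [hG, map_mul, aeval_C, mul_eq_zero] at hH
  exact hH.resolve_left (by simp [PowerSeries.algebraMap_polynomial_apply])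

theorem shift_desingularization_general (c : ℕ → ℂ)
    (halg : ∃ F : MvPolynomial (Fin 2) ℂ, F ≠ 0 ∧
      MvPolynomial.aeval ![PowerSeries.X, PowerSeries.mk c] F = 0) :
    ∃ N₀ : ℕ, ∀ N ≥ N₀,
      ∃ G : MvPolynomial (Fin 2) ℂ, G ≠ 0 ∧
        MvPolynomial.aeval
          ![PowerSeries.X, PowerSeries.mk (fun i => if N ≤ i then c (i + N) else 0)] G = 0 ∧
        MvPolynomial.eval
          ![0, PowerSeries.constantCoeff
              (PowerSeries.mk (fun i => if N ≤ i then c (i + N) else 0))]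
          (MvPolynomial.pderiv 1 G) ≠ 0 := by
  obtain ⟨F, hF0, hF⟩ := halg
  have hf : IsAlgebraic ℂ[X] (PowerSeries.mk c) := by
    refine ⟨(equivMvPolynomial ℂ).symm F, by simpa using hF0, ?_⟩
    rw [← PowerSeries.aeval_X_equivMvPolynomial, AlgEquiv.apply_symm_apply, hF]
  obtain ⟨N₀, hN₀⟩ := eventually_atTop.1
    (hf.eventually_exists_aeval_tailShift_eq_zero.and (eventually_ne_atTop 0))
  refine ⟨N₀, fun N hN => ?_⟩
  obtain ⟨⟨G, hG, hG1⟩, hN0⟩ := hN₀ N hN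
  have hg : PowerSeries.mk (fun i => if N ≤ i then c (i + N) else 0) =
      PowerSeries.tailShift N (PowerSeries.mk c) := by
    simp [PowerSeries.tailShift]
  refine ⟨equivMvPolynomial ℂ G, ?_, ?_, ?_⟩
  · rintro hG0
    simp [(equivMvPolynomial ℂ).map_eq_zero_iff.1 hG0] at hG1
  · rw [hg, PowerSeries.aeval_X_equivMvPolynomial, hG]
  · rw [hg, PowerSeries.constantCoeff_tailShift hN0, eval_zero_pderiv_one_equivMvPolynomial]
    exact hG1

/-- if `f(t) = Σ_{i≥1} cᵢ tⁱ` is an algebraic power series, then for all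
sufficiently large `N` the shifted series `Σ_{i≥N} c_{i+N} tⁱ` is *nonsingular*
algebraic: it satisfies `G(t, g(t)) = 0` for some nonzero `G ∈ ℂ[x,y]` with
`∂G/∂y(0, g(0)) ≠ 0`. -/
theorem shift_desingularization (c : ℕ → ℂ) (hc0 : c 0 = 0)
    (halg : ∃ F : MvPolynomial (Fin 2) ℂ, F ≠ 0 ∧
      MvPolynomial.aeval ![PowerSeries.X, PowerSeries.mk c] F = 0) :
    ∃ N₀ : ℕ, ∀ N ≥ N₀,
      ∃ G : MvPolynomial (Fin 2) ℂ, G ≠ 0 ∧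
        MvPolynomial.aeval
          ![PowerSeries.X, PowerSeries.mk (fun i => if N ≤ i then c (i + N) else 0)] G = 0 ∧
        MvPolynomial.eval
          ![0, PowerSeries.constantCoeff
              (PowerSeries.mk (fun i => if N ≤ i then c (i + N) else 0))]
          (MvPolynomial.pderiv 1 G) ≠ 0 :=
  shift_desingularization_general c halg
end

section
/- For every matrix f ∈ Mat_p(ℂ⟨X₁,…,X_q⟩) of noncommutative polynomials there exist an integer N > 0 and matrices b ∈ Mat_{p×N}(ℂ), c ∈ Mat_{N×p}(ℂ), and d ∈ GL_N(ℂ⟨X₁,…,X_q⟩) with every entry of d in the ℂ-linear span of 1, X₁,…,X_q, such that f = b d⁻¹ c. -/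
/-!
A matrix of the form `b d⁻¹ c` (scalar `b`, `c`; `d` invertible with entries in `V ∋ 1`) is
called linearizable. Such matrices are closed under sums and products, using block
upper-triangular `d`:
`b₁ d₁⁻¹ c₁ · b₂ d₂⁻¹ c₂ = [b₁ 0] [[d₁, -c₁ b₂], [0, d₂]]⁻¹ [0; c₂]`.
A matrix `x` with entries in `V` is `[1 0] [[1, -x], [0, 1]]⁻¹ [0; 1]`. Since the free algebra
is generated by the variables, every `1 × 1` matrix is linearizable, and summing matrix units
`single i j a = eᵢ [a] eⱼᵀ` gives every matrix.
-/

open Matrix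

namespace Matrix

variable {m n : Type*} [Fintype m] [Fintype n] [DecidableEq m] [DecidableEq n]
  {R : Type*} [Ring R]

def fromBlocksZero₂₁Unit (u : (Matrix m m R)ˣ) (x : Matrix m n R) (v : (Matrix n n R)ˣ) :
    (Matrix (m ⊕ n) (m ⊕ n) R)ˣ where
  val := fromBlocks u x 0 v
  inv := fromBlocks (↑u⁻¹ : Matrix m m R) (-((↑u⁻¹ : Matrix m m R) * x * (↑v⁻¹ : Matrix n n R))) 0
    (↑v⁻¹ : Matrix n n R)
  val_inv := by simp [fromBlocks_multiply, ← Matrix.mul_assoc]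
  inv_val := by simp [fromBlocks_multiply, Matrix.mul_assoc]

@[simp]
theorem coe_fromBlocksZero₂₁Unit (u : (Matrix m m R)ˣ) (x : Matrix m n R) (v : (Matrix n n R)ˣ) :
    ((fromBlocksZero₂₁Unit u x v : (Matrix (m ⊕ n) (m ⊕ n) R)ˣ) : Matrix (m ⊕ n) (m ⊕ n) R) =
      fromBlocks (u : Matrix m m R) x 0 (v : Matrix n n R) := rfl

@[simp]
theorem coe_fromBlocksZero₂₁Unit_inv (u : (Matrix m m R)ˣ) (x : Matrix m n R)
    (v : (Matrix n n R)ˣ) :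
    (↑(fromBlocksZero₂₁Unit u x v)⁻¹ : Matrix (m ⊕ n) (m ⊕ n) R) =
      fromBlocks (↑u⁻¹ : Matrix m m R) (-((↑u⁻¹ : Matrix m m R) * x * (↑v⁻¹ : Matrix n n R))) 0
        (↑v⁻¹ : Matrix n n R) := rfl

end Matrix

section Linearization

variable {K A : Type*} [CommRing K] [Ring A] [Algebra K A] (V : Submodule K A)
  {l m n : Type*}

def IsLinearizableOfSize (f : Matrix m n A) (N : ℕ) : Prop :=
  ∃ (b : Matrix m (Fin N) K) (c : Matrix (Fin N) n K) (d : (Matrix (Fin N) (Fin N) A)ˣ),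
    (∀ i j, (d : Matrix (Fin N) (Fin N) A) i j ∈ V) ∧
      f = b.map (algebraMap K A) * (↑d⁻¹ : Matrix (Fin N) (Fin N) A) * c.map (algebraMap K A)

def IsLinearizable (f : Matrix m n A) : Prop :=
  ∃ N, IsLinearizableOfSize V f N

variable {V}

theorem algebraMap_mem_of_one_mem (hV : (1 : A) ∈ V) (r : K) : algebraMap K A r ∈ V := by
  simpa only [Algebra.algebraMap_eq_smul_one] using V.smul_mem r hV

theorem one_apply_mem_of_one_mem [DecidableEq m] (hV : (1 : A) ∈ V) (i j : m) :
    (1 : Matrix m m A) i j ∈ V := by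
  rw [one_apply]
  split_ifs
  exacts [hV, V.zero_mem]

theorem isLinearizableOfSize_of_equiv {ι : Type*} [Fintype ι] [DecidableEq ι] {N : ℕ}
    (e : ι ≃ Fin N) {f : Matrix m n A} (b : Matrix m ι K) (c : Matrix ι n K) (d : (Matrix ι ι A)ˣ)
    (hd : ∀ i j, (d : Matrix ι ι A) i j ∈ V)
    (hf : f = b.map (algebraMap K A) * (↑d⁻¹ : Matrix ι ι A) * c.map (algebraMap K A)) :
    IsLinearizableOfSize V f N := by
  refine ⟨b.submatrix id e.symm, c.submatrix e.symm id,
    Units.map (reindexRingEquiv A e).toMonoidHom d, fun i j => hd _ _, ?_⟩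
  simp only [hf, Units.coe_map_inv, RingEquiv.toMonoidHom, RingHom.toMonoidHom_eq_coe,
    MonoidHom.coe_coe, RingEquiv.toRingHom_eq_coe, RingEquiv.coe_toRingHom, coe_reindexRingEquiv,
    reindex_apply, ← submatrix_map, submatrix_mul_equiv, submatrix_id_id]

theorem isLinearizableOfSize_zero (hV : (1 : A) ∈ V) :
    IsLinearizableOfSize V (0 : Matrix m n A) 1 :=
  ⟨0, 0, 1, fun i j => by rw [Subsingleton.elim i j]; simpa using hV, by simp⟩

theorem IsLinearizableOfSize.add {f₁ f₂ : Matrix m n A} {N₁ N₂ : ℕ}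
    (h₁ : IsLinearizableOfSize V f₁ N₁) (h₂ : IsLinearizableOfSize V f₂ N₂) :
    IsLinearizableOfSize V (f₁ + f₂) (N₁ + N₂) := by
  obtain ⟨b₁, c₁, d₁, hd₁, rfl⟩ := h₁
  obtain ⟨b₂, c₂, d₂, hd₂, rfl⟩ := h₂
  refine isLinearizableOfSize_of_equiv finSumFinEquiv (fromCols b₁ b₂) (fromRows c₁ c₂)
    (fromBlocksZero₂₁Unit d₁ 0 d₂) ?_ ?_
  · rintro (i | i) (j | j) <;> simp [hd₁, hd₂]
  · simp [fromCols_map, fromRows_map, fromCols_mul_fromBlocks, fromCols_mul_fromRows]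

theorem IsLinearizableOfSize.mul [Fintype m] (hV : (1 : A) ∈ V) {f₁ : Matrix l m A}
    {f₂ : Matrix m n A} {N₁ N₂ : ℕ} (h₁ : IsLinearizableOfSize V f₁ N₁)
    (h₂ : IsLinearizableOfSize V f₂ N₂) : IsLinearizableOfSize V (f₁ * f₂) (N₁ + N₂) := by
  obtain ⟨b₁, c₁, d₁, hd₁, rfl⟩ := h₁
  obtain ⟨b₂, c₂, d₂, hd₂, rfl⟩ := h₂
  refine isLinearizableOfSize_of_equiv finSumFinEquiv (fromCols b₁ 0) (fromRows 0 c₂)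
    (fromBlocksZero₂₁Unit d₁ (-(c₁ * b₂).map (algebraMap K A)) d₂) ?_ ?_
  · rintro (i | i) (j | j)
    exacts [hd₁ i j, V.neg_mem (algebraMap_mem_of_one_mem hV _), V.zero_mem, hd₂ i j]
  · simp [fromCols_map, fromRows_map, fromCols_mul_fromBlocks, fromCols_mul_fromRows,
      Matrix.map_mul, Matrix.mul_assoc]

theorem isLinearizable_of_forall_mem [Fintype m] [DecidableEq m] [Fintype n] [DecidableEq n]
    (hV : (1 : A) ∈ V) {f : Matrix m n A} (hf : ∀ i j, f i j ∈ V) : IsLinearizable V f := by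
  refine ⟨_, isLinearizableOfSize_of_equiv (Fintype.equivFin _) (fromCols 1 0) (fromRows 0 1)
    (fromBlocksZero₂₁Unit 1 (-f) 1) ?_ ?_⟩
  · rintro (i | i) (j | j) <;> simp [hf, one_apply_mem_of_one_mem hV]
  · simp [fromCols_map, fromRows_map, fromCols_mul_fromBlocks, fromCols_mul_fromRows]

theorem IsLinearizable.add {f₁ f₂ : Matrix m n A} (h₁ : IsLinearizable V f₁)
    (h₂ : IsLinearizable V f₂) : IsLinearizable V (f₁ + f₂) :=
  let ⟨_, h₁⟩ := h₁; let ⟨_, h₂⟩ := h₂; ⟨_, h₁.add h₂⟩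

theorem IsLinearizable.mul [Fintype m] (hV : (1 : A) ∈ V) {f₁ : Matrix l m A}
    {f₂ : Matrix m n A} (h₁ : IsLinearizable V f₁) (h₂ : IsLinearizable V f₂) :
    IsLinearizable V (f₁ * f₂) :=
  let ⟨_, h₁⟩ := h₁; let ⟨_, h₂⟩ := h₂; ⟨_, h₁.mul hV h₂⟩

theorem isLinearizable_of_mem_adjoin (hV : (1 : A) ∈ V) {S : Set A} (hS : S ⊆ V) {a : A}
    (ha : a ∈ Algebra.adjoin K S) : IsLinearizable V (of fun (_ _ : Unit) => a) := by
  induction ha using Algebra.adjoin_induction with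
  | mem x hx => exact isLinearizable_of_forall_mem hV fun _ _ => hS hx
  | algebraMap r => exact isLinearizable_of_forall_mem hV fun _ _ => algebraMap_mem_of_one_mem hV r
  | add x y _ _ hx hy =>
    convert hx.add hy using 1
    ext
    simp
  | mul x y _ _ hx hy =>
    convert hx.mul hV hy using 1
    ext
    simp [mul_apply]

theorem isLinearizable_of_forall_entry [Fintype m] [DecidableEq m] [Fintype n] [DecidableEq n]
    (hV : (1 : A) ∈ V) {f : Matrix m n A}
    (hf : ∀ i j, IsLinearizable V (of fun (_ _ : Unit) => f i j)) : IsLinearizable V f := by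
  have hsingle (i : m) (j : n) : single i j (f i j) =
      (1 : Matrix m m A).submatrix id (fun _ : Unit => i) * of (fun (_ _ : Unit) => f i j) *
        (1 : Matrix n n A).submatrix (fun _ : Unit => j) id := by
    ext i' j'
    by_cases hi : i = i' <;> by_cases hj : j = j' <;> simp [mul_apply, one_apply, hi, hj, eq_comm]
  rw [matrix_eq_sum_single f]
  have hzero : IsLinearizable V (0 : Matrix m n A) := ⟨1, isLinearizableOfSize_zero hV⟩
  refine Finset.sum_induction _ _ (fun _ _ => .add) hzero fun i _ =>
    Finset.sum_induction _ _ (fun _ _ => .add) hzero fun j _ => ?_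
  rw [hsingle]
  exact ((isLinearizable_of_forall_mem hV fun _ _ => one_apply_mem_of_one_mem hV _ _).mul hV
    (hf i j)).mul hV (isLinearizable_of_forall_mem hV fun _ _ => one_apply_mem_of_one_mem hV _ _)

end Linearization

/-- linearization / Schützenberger fragment: every matrix of
noncommutative polynomials `f ∈ Mat_p(ℂ⟨X₁,…,X_q⟩)` factors as `b d⁻¹ c` with
`b, c` scalar matrices and `d` an invertible matrix whose entries lie in the
linear span of `1, X₁, …, X_q`. -/
theorem linearization_exists (p q : ℕ)
    (f : Matrix (Fin p) (Fin p) (FreeAlgebra ℂ (Fin q))) :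
    ∃ (N : ℕ), 0 < N ∧
      ∃ (b : Matrix (Fin p) (Fin N) ℂ) (c : Matrix (Fin N) (Fin p) ℂ)
        (d : Matrix (Fin N) (Fin N) (FreeAlgebra ℂ (Fin q))),
        IsUnit d ∧
        (∀ i j, d i j ∈ Submodule.span ℂ
          (insert (1 : FreeAlgebra ℂ (Fin q)) (Set.range (FreeAlgebra.ι ℂ)))) ∧
        f = (b.map (algebraMap ℂ (FreeAlgebra ℂ (Fin q)))) * Ring.inverse d *
              (c.map (algebraMap ℂ (FreeAlgebra ℂ (Fin q)))) := by
  set V := Submodule.span ℂ (insert (1 : FreeAlgebra ℂ (Fin q)) (Set.range (FreeAlgebra.ι ℂ)))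
  have hV : 1 ∈ V := Submodule.subset_span (Set.mem_insert _ _)
  have hι : Set.range (FreeAlgebra.ι ℂ) ⊆ (V : Set (FreeAlgebra ℂ (Fin q))) := fun _ hx =>
    Submodule.subset_span (Set.mem_insert_of_mem _ hx)
  obtain ⟨N, hf⟩ := isLinearizable_of_forall_entry (f := f) hV fun i j =>
    isLinearizable_of_mem_adjoin hV hι (FreeAlgebra.adjoin_range_ι ℂ (Fin q) ▸ Algebra.mem_top)
  -- a trivial `1 × 1` block makes the size positive
  obtain ⟨b, c, d, hd, hbdc⟩ := add_zero f ▸ hf.add (isLinearizableOfSize_zero hV)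
  exact ⟨N + 1, N.succ_pos, b, c, d, d.isUnit, hd, by rwa [Ring.inverse_unit]⟩
end

section
/- Let q ≥ 1. Define the binary operation ⋆ on ℕ by x ⋆ y = x·q^ℓ + y, where ℓ is the unique natural number with (q^ℓ − 1)/(q − 1) ≤ y ≤ q·(q^ℓ − 1)/(q − 1) (for q = 1, ℓ = y). Then (ℕ, ⋆) is a monoid with identity 0, freely generated by the elements 1, 2, …, q. -/
/-- let `q ≥ 1` and let `⋆ : ℕ → ℕ → ℕ` be the operation
`x ⋆ y = x·q^ℓ + y`, where `ℓ` is the unique natural number with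
`(q^ℓ-1)/(q-1) = Σ_{i<ℓ} qⁱ ≤ y ≤ q·Σ_{i<ℓ} qⁱ` (this pins down `star` completely,
and for `q = 1` it forces `ℓ = y`).  Then `(ℕ, ⋆)` is a monoid with identity `0`,
freely generated by `1, …, q`: it is associative with two-sided identity `0`, and
every `x ∈ ℕ` is the `⋆`-product of a unique list of digits from `{1,…,q}`. -/
theorem improper_base_q_free_monoid (q : ℕ) (hq : 1 ≤ q)
    (star : ℕ → ℕ → ℕ)
    (hstar : ∀ x y ℓ : ℕ,
      (∑ i ∈ Finset.range ℓ, q ^ i) ≤ y ∧ y ≤ q * ∑ i ∈ Finset.range ℓ, q ^ i →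
      star x y = x * q ^ ℓ + y) :
    (∀ x y z : ℕ, star (star x y) z = star x (star y z)) ∧
    (∀ x : ℕ, star 0 x = x ∧ star x 0 = x) ∧
    (∀ x : ℕ, ∃! l : List ℕ,
      (∀ d ∈ l, 1 ≤ d ∧ d ≤ q) ∧ l.foldl star 0 = x) := by
  -- S(ℓ+1) = q * S ℓ + 1
  have hSsucc : ∀ ℓ : ℕ, (∑ i ∈ Finset.range (ℓ+1), q ^ i)
      = q * (∑ i ∈ Finset.range ℓ, q ^ i) + 1 := by
    intro ℓ
    rw [Finset.sum_range_succ']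
    simp [pow_succ, Finset.mul_sum, mul_comm]
  -- every y lies in some interval
  have hex : ∀ y : ℕ, ∃ ℓ : ℕ,
      (∑ i ∈ Finset.range ℓ, q ^ i) ≤ y ∧ y ≤ q * ∑ i ∈ Finset.range ℓ, q ^ i := by
    intro y
    induction y using Nat.strong_induction_on with
    | _ y ih =>
      rcases Nat.eq_zero_or_pos y with rfl | hy
      · exact ⟨0, by simp⟩
      · have hdm := Nat.div_add_mod (y-1) q
        have hmod : (y-1) % q < q := Nat.mod_lt _ (by omega)
        have hy' : (y-1)/q < y := lt_of_le_of_lt (Nat.div_le_self _ _) (by omega)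
        obtain ⟨ℓ, h1, h2⟩ := ih _ hy'
        refine ⟨ℓ+1, ?_, ?_⟩
        · rw [hSsucc]
          have := Nat.mul_le_mul_left q h1
          omega
        · rw [hSsucc]
          have := Nat.mul_le_mul_left q h2
          calc y = q * ((y-1)/q) + ((y-1) % q + 1) := by omega
            _ ≤ q * (q * ∑ i ∈ Finset.range ℓ, q ^ i) + q := by
                have := Nat.mul_le_mul_left q h2; omega
            _ = q * (q * (∑ i ∈ Finset.range ℓ, q ^ i) + 1) := by ring
  have hstar0 : ∀ x, star x 0 = x := by
    intro x; have := hstar x 0 0 (by simp); simpa using this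
  have hstar1 : ∀ x d, 1 ≤ d → d ≤ q → star x d = x * q + d := by
    intro x d h1 h2
    have := hstar x d 1 (by simpa using ⟨h1, h2⟩)
    simpa using this
  -- sum splitting
  have Ssum : ∀ a b : ℕ, (∑ i ∈ Finset.range (a+b), q ^ i)
      = (∑ i ∈ Finset.range a, q ^ i) * q ^ b + ∑ i ∈ Finset.range b, q ^ i := by
    intro a b
    induction a with
    | zero => simp
    | succ n ih =>
      rw [Nat.succ_add, Finset.sum_range_succ, ih, Finset.sum_range_succ, pow_add]
      ring
  -- uniqueness of digit decomposition
  have uniq_dec : ∀ a d a' d' : ℕ, 1 ≤ d → d ≤ q → 1 ≤ d' → d' ≤ q →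
      a * q + d = a' * q + d' → a = a' ∧ d = d' := by
    have key : ∀ a d a' d' : ℕ, 1 ≤ d → d ≤ q → 1 ≤ d' → a < a' →
        a * q + d ≠ a' * q + d' := by
      intro a d a' d' h1 h2 h3 h4
      have h6 : a * q + q ≤ a' * q := by
        calc a * q + q = (a+1) * q := by ring
          _ ≤ a' * q := Nat.mul_le_mul_right q h4
      have h7 : a * q + d < a' * q + d' := by
        calc a * q + d ≤ a * q + q := by omega
          _ ≤ a' * q := h6
          _ < a' * q + d' := by omega
      exact h7.ne
    intro a d a' d' h1 h2 h3 h4 h5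
    rcases lt_trichotomy a a' with h | h | h
    · exact absurd h5 (key a d a' d' h1 h2 h3 h)
    · subst h; omega
    · exact absurd h5.symm (key a' d' a d h3 h4 h1 h)
  refine ⟨?_, ?_, ?_⟩
  · -- associativity
    intro x y z
    obtain ⟨a, ha1, ha2⟩ := hex y
    obtain ⟨b, hb1, hb2⟩ := hex z
    have h1 : star y z = y * q ^ b + z := hstar y z b ⟨hb1, hb2⟩
    have h2 : star x y = x * q ^ a + y := hstar x y a ⟨ha1, ha2⟩
    have key1 : (∑ i ∈ Finset.range (a+b), q ^ i) ≤ y * q ^ b + z := by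
      rw [Ssum]
      exact Nat.add_le_add (Nat.mul_le_mul_right _ ha1) hb1
    have key2 : y * q ^ b + z ≤ q * ∑ i ∈ Finset.range (a+b), q ^ i := by
      rw [Ssum]
      calc y * q ^ b + z ≤ (q * ∑ i ∈ Finset.range a, q ^ i) * q ^ b
            + q * ∑ i ∈ Finset.range b, q ^ i :=
          Nat.add_le_add (Nat.mul_le_mul_right _ ha2) hb2
        _ = q * ((∑ i ∈ Finset.range a, q ^ i) * q ^ b + ∑ i ∈ Finset.range b, q ^ i) := by
            ring
    have h3 : star x (star y z) = x * q ^ (a+b) + (y * q ^ b + z) := by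
      rw [h1]; exact hstar _ _ (a+b) ⟨key1, key2⟩
    have h4 : star (star x y) z = (x * q ^ a + y) * q ^ b + z := by
      rw [h2]; exact hstar _ _ b ⟨hb1, hb2⟩
    rw [h3, h4, pow_add]; ring
  · -- identity
    intro x
    obtain ⟨ℓ, h1, h2⟩ := hex x
    constructor
    · have := hstar 0 x ℓ ⟨h1, h2⟩; simpa using this
    · exact hstar0 x
  · -- unique factorization
    intro x
    induction x using Nat.strong_induction_on with
    | _ x ih =>
      rcases Nat.eq_zero_or_pos x with rfl | hx
      · refine ⟨[], ⟨by simp, by simp⟩, ?_⟩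
        rintro l ⟨hld, hlf⟩
        rcases List.eq_nil_or_concat l with rfl | ⟨m, e, rfl⟩
        · rfl
        · exfalso
          have he : 1 ≤ e ∧ e ≤ q := hld e (by simp [List.concat_eq_append])
          have : List.foldl star 0 (m.concat e) = star (List.foldl star 0 m) e := by
            simp [List.concat_eq_append]
          rw [this, hstar1 _ _ he.1 he.2] at hlf
          omega
      · set x' := (x-1)/q with hx'def
        set d0 := (x-1) % q + 1 with hd0def
        have hdm : q * x' + (x-1) % q = x - 1 := by
          rw [hx'def]; exact Nat.div_add_mod (x-1) q
        have hmod : (x-1) % q < q := Nat.mod_lt _ (by omega)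
        have hxeq : x = x' * q + d0 := by
          have hc : x' * q = q * x' := Nat.mul_comm _ _
          omega
        have hd1 : 1 ≤ d0 := by omega
        have hd2 : d0 ≤ q := by omega
        have hx'lt : x' < x := lt_of_le_of_lt (Nat.div_le_self _ _) (by omega)
        obtain ⟨l', ⟨hl'd, hl'f⟩, hl'u⟩ := ih x' hx'lt
        have hfoldc : ∀ (m : List ℕ) (e : ℕ), List.foldl star 0 (m.concat e)
            = star (List.foldl star 0 m) e := by
          intro m e; simp [List.concat_eq_append]
        refine ⟨l'.concat d0, ⟨?_, ?_⟩, ?_⟩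
        · intro d hd
          simp only [List.concat_eq_append, List.mem_append, List.mem_singleton] at hd
          rcases hd with h | h
          · exact hl'd d h
          · subst h; exact ⟨hd1, hd2⟩
        · rw [hfoldc, hl'f, hstar1 _ _ hd1 hd2]; omega
        · rintro l ⟨hld, hlf⟩
          rcases List.eq_nil_or_concat l with rfl | ⟨m, e, rfl⟩
          · simp at hlf; omega
          · have he : 1 ≤ e ∧ e ≤ q := hld e (by simp [List.concat_eq_append])
            rw [hfoldc, hstar1 _ _ he.1 he.2] at hlf
            have hud := uniq_dec (List.foldl star 0 m) e x' d0 he.1 he.2 hd1 hd2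
              (by omega)
            have hm : m = l' := hl'u m ⟨fun d hd => hld d (by simp [hd]), hud.1⟩
            rw [hm, hud.2]
end

section
/- Let {κⱼ}_{j≥1} be complex numbers and let H ∈ 𝔐 be the Hessenberg–Toeplitz matrix with H(i+1, i) = 1 for all i ∈ ℕ, H(i, i+j) = κ_{j+1} for all i, j ∈ ℕ, and all other entries 0. Then, in the noncommutative probability space (𝔐, φ) with φ(M) = M(0,0), the j-th free cumulant of the law of H equals κⱼ for every j ≥ 1. Equivalently, letting g(z) = Σ_{n≥0} φ(Hⁿ)/z^{n+1} be the Stieltjes transform of the law of H, the identity 1 = (z − κ₁)g − Σ_{j≥2} κⱼ gʲ holds in ℂ((1/z)). -/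
/-- Powers of a column-finite `ℕ×ℕ` complex matrix (entrywise, with finite sums). -/
noncomputable def matPow (M : ℕ → ℕ → ℂ) : ℕ → ℕ → ℕ → ℂ
  | 0 => fun i j => if i = j then 1 else 0
  | (n + 1) => fun i j => ∑ᶠ k, matPow M n i k * M k j

/-- The Hessenberg–Toeplitz matrix with subdiagonal `1`'s and `H(i, i+j) = κ_{j+1}`. -/
noncomputable def hessToep (κ : ℕ → ℂ) (i j : ℕ) : ℂ :=
  if i = j + 1 then 1 else if i ≤ j then κ (j - i + 1) else 0

/-!
Right multiplication by `H` sends a row `v` to `j ↦ v (j + 1) + ∑_{k ≤ j} v k κ (j - k + 1)`,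
so the generating series `Rₙ(u) = ∑ⱼ Hⁿ(0, j) uʲ` of row `0` of `Hⁿ` satisfy
`u Rₙ₊₁ = Rₙ - Rₙ(0) + u Rₙ K(u)` with `K(u) = ∑ᵣ κᵣ₊₁ uʳ`. We apply the kernel method:
substitute for `u` the Stieltjes transform `g = X ∑ₙ φ(Hⁿ) Xⁿ` (with `X = 1/z`, so that `g` has
no constant term), multiply by `Xⁿ` and telescope. Since `Rₙ(0) = φ(Hⁿ)`, the kernel
`Δ = g - X (1 + g K(g))` satisfies `Δ ∑_{n ≤ N} Xⁿ Rₙ(g) ≡ 0 mod X^{N+1}`. The sum has constant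
term `1`, hence `Δ = 0`, which is `1 = (z - κ₁) g - ∑_{j ≥ 2} κⱼ gʲ`.
-/

namespace HessenbergToeplitz

open PowerSeries
open Finset (range sum_range_succ sum_range_succ' sum_congr)

variable (κ : ℕ → ℂ)

lemma hessToep_of_succ_lt {i j : ℕ} (h : j + 1 < i) : hessToep κ i j = 0 := by
  rw [hessToep, if_neg (by omega), if_neg (by omega)]

lemma hessToep_succ_self (j : ℕ) : hessToep κ (j + 1) j = 1 := if_pos rfl

lemma hessToep_of_le {i j : ℕ} (h : i ≤ j) : hessToep κ i j = κ (j - i + 1) := by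
  rw [hessToep, if_neg (by omega), if_pos h]

lemma matPow_succ_hessToep (n i j : ℕ) :
    matPow (hessToep κ) (n + 1) i j =
      matPow (hessToep κ) n i (j + 1) +
        ∑ k ∈ range (j + 1), matPow (hessToep κ) n i k * κ (j - k + 1) := by
  have hsupp : (Function.support fun k => matPow (hessToep κ) n i k * hessToep κ k j) ⊆
      ↑(range (j + 2)) := by
    intro k hk
    by_contra hkj
    simp only [Finset.coe_range, Set.mem_Iio, not_lt] at hkj
    exact hk (show _ * _ = 0 by rw [hessToep_of_succ_lt κ (by omega), mul_zero])
  change ∑ᶠ k, _ = _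
  rw [finsum_eq_sum_of_support_subset _ hsupp, sum_range_succ,
    hessToep_succ_self, mul_one, add_comm]
  refine congrArg _ (sum_congr rfl fun k hk => ?_)
  rw [hessToep_of_le κ (by simpa [Nat.lt_succ_iff] using hk)]

noncomputable def rowSeries (i n : ℕ) : ℂ⟦X⟧ := mk fun j => matPow (hessToep κ) n i j

noncomputable def cumulantSeries : ℂ⟦X⟧ := mk fun r => κ (r + 1)

noncomputable def momentSeries : ℂ⟦X⟧ := mk fun n => matPow (hessToep κ) n 0 0

noncomputable def stieltjesSeries : ℂ⟦X⟧ := X * momentSeries κ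

lemma X_mul_rowSeries_succ (i n : ℕ) :
    X * rowSeries κ i (n + 1) =
      rowSeries κ i n - C (matPow (hessToep κ) n i 0) +
        X * rowSeries κ i n * cumulantSeries κ := by
  ext j
  cases j with
  | zero => simp [rowSeries]
  | succ j =>
    rw [map_add, map_sub, coeff_C, if_neg j.succ_ne_zero, mul_assoc, coeff_succ_X_mul,
      coeff_succ_X_mul, coeff_mul, Finset.Nat.sum_antidiagonal_eq_sum_range_succ
        (fun p q => coeff p (rowSeries κ i n) * coeff q (cumulantSeries κ))]
    simp only [rowSeries, cumulantSeries, coeff_mk, matPow_succ_hessToep, sub_zero]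

lemma hasSubst_stieltjesSeries : HasSubst (stieltjesSeries κ) :=
  HasSubst.of_constantCoeff_zero' (by simp [stieltjesSeries])

lemma rowSeries_zero_zero : rowSeries κ 0 0 = 1 := by
  ext j
  simp [rowSeries, matPow, coeff_one, eq_comm]

lemma stieltjes_mul_subst_rowSeries_succ (n : ℕ) :
    stieltjesSeries κ * (rowSeries κ 0 (n + 1)).subst (stieltjesSeries κ) =
      (rowSeries κ 0 n).subst (stieltjesSeries κ) *
          (1 + stieltjesSeries κ * (cumulantSeries κ).subst (stieltjesSeries κ)) -
        C (coeff n (momentSeries κ)) := by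
  have h := congrArg (substAlgHom (hasSubst_stieltjesSeries κ)) (X_mul_rowSeries_succ κ 0 n)
  simp only [map_add, map_sub, map_mul, substAlgHom_X, coe_substAlgHom] at h
  rw [h, subst_C, ← C_apply, momentSeries, coeff_mk]
  ring

lemma kernel_mul_sum_range (N : ℕ) :
    (stieltjesSeries κ -
        X * (1 + stieltjesSeries κ * (cumulantSeries κ).subst (stieltjesSeries κ))) *
      ∑ n ∈ range N, X ^ n * (rowSeries κ 0 n).subst (stieltjesSeries κ) =
    stieltjesSeries κ * (1 - X ^ N * (rowSeries κ 0 N).subst (stieltjesSeries κ)) -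
      X * (trunc N (momentSeries κ) : ℂ⟦X⟧) := by
  induction N with
  | zero =>
    rw [rowSeries_zero_zero, ← coe_substAlgHom (hasSubst_stieltjesSeries κ), map_one]
    simp
  | succ N ih =>
    rw [sum_range_succ, mul_add, ih, trunc_succ, Polynomial.coe_add, Polynomial.coe_monomial,
      monomial_eq_C_mul_X_pow]
    linear_combination X ^ (N + 1) * stieltjes_mul_subst_rowSeries_succ κ N

lemma isUnit_sum_range (N : ℕ) :
    IsUnit (∑ n ∈ range (N + 1), X ^ n * (rowSeries κ 0 n).subst (stieltjesSeries κ)) := by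
  rw [isUnit_iff_constantCoeff, sum_range_succ', map_add, map_sum, rowSeries_zero_zero,
    ← coe_substAlgHom (hasSubst_stieltjesSeries κ), map_one]
  simp [pow_succ]

lemma stieltjes_sub_X_mul_trunc_dvd (N : ℕ) :
    X ^ (N + 1) ∣ stieltjesSeries κ - X * (trunc N (momentSeries κ) : ℂ⟦X⟧) := by
  have h := eq_X_pow_mul_shift_add_trunc N (momentSeries κ)
  refine ⟨mk fun i => coeff (i + N) (momentSeries κ), ?_⟩
  rw [stieltjesSeries]
  nth_rewrite 1 [h]
  ring

theorem stieltjesSeries_eq_X_mul :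
    stieltjesSeries κ =
      X * (1 + stieltjesSeries κ * (cumulantSeries κ).subst (stieltjesSeries κ)) := by
  rw [← sub_eq_zero]
  ext N
  refine X_pow_dvd_iff.mp ?_ N (Nat.lt_succ_self N)
  rw [← (isUnit_sum_range κ N).dvd_mul_right, kernel_mul_sum_range, mul_sub, mul_one,
    sub_right_comm]
  exact dvd_sub ((pow_dvd_pow X N.succ.le_succ).trans (stieltjes_sub_X_mul_trunc_dvd κ _))
    ((dvd_mul_right _ _).mul_left _)

lemma X_mul_cumulantSeries_sub_C :
    X * (cumulantSeries κ - C (κ 1)) = mk fun j => if 2 ≤ j then κ j else 0 := by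
  ext (_ | _ | j) <;> simp [cumulantSeries]

theorem momentSeries_sub_C_mul_stieltjesSeries :
    momentSeries κ - C (κ 1) * stieltjesSeries κ =
      1 + (mk fun j => if 2 ≤ j then κ j else 0).subst (stieltjesSeries κ) := by
  have hΨ := hasSubst_stieltjesSeries κ
  have hM : momentSeries κ =
      1 + stieltjesSeries κ * (cumulantSeries κ).subst (stieltjesSeries κ) := by
    refine mul_left_cancel₀ X_ne_zero ?_
    rw [← stieltjesSeries]
    exact stieltjesSeries_eq_X_mul κ
  rw [← X_mul_cumulantSeries_sub_C, subst_mul hΨ, subst_sub hΨ, subst_X hΨ, subst_C, ← C_apply,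
    hM]
  ring

lemma coeff_momentSeries_sub_C_mul_stieltjesSeries (n : ℕ) :
    coeff n (momentSeries κ - C (κ 1) * stieltjesSeries κ) =
      coeff n 1 + ∑ᶠ j : ℕ, if 2 ≤ j then κ j * coeff n (stieltjesSeries κ ^ j) else 0 := by
  rw [momentSeries_sub_C_mul_stieltjesSeries, map_add,
    coeff_subst' (hasSubst_stieltjesSeries κ)]
  congr 1
  refine finsum_congr fun j => ?_
  split_ifs <;> simp_all

end HessenbergToeplitz

open HessenbergToeplitz in
/-- let `H` be the Hessenberg–Toeplitz matrix built from `{κⱼ}_{j≥1}`.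
In `(𝔐, φ)` with `φ(M) = M(0,0)`, the `j`-th free cumulant of the law of `H` is `κⱼ`;
equivalently, the Stieltjes transform `g(z) = Σ_{n≥0} φ(Hⁿ)/z^{n+1}` of the law of `H`
satisfies `1 = (z − κ₁)g − Σ_{j≥2} κⱼ gʲ` in `ℂ((1/z))` (the sum converges
coefficientwise: only finitely many `j` contribute to each coefficient). -/
theorem hessenberg_toeplitz_cumulants (κ : ℕ → ℂ) :
    ∀ m : ℤ,
      (1 : LaurentSeries ℂ).coeff m =
        (((zL - HahnSeries.C (κ 1)) *
            (HahnSeries.single (1 : ℤ) (1 : ℂ) *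
              HahnSeries.ofPowerSeries ℤ ℂ
                (PowerSeries.mk fun n => matPow (hessToep κ) n 0 0))).coeff m) -
          ∑ᶠ j : ℕ, if 2 ≤ j then
            κ j * (((HahnSeries.single (1 : ℤ) (1 : ℂ) *
              HahnSeries.ofPowerSeries ℤ ℂ
                (PowerSeries.mk fun n => matPow (hessToep κ) n 0 0)) ^ j).coeff m)
            else 0 := by
  intro m
  have hg : HahnSeries.single (1 : ℤ) (1 : ℂ) *
      HahnSeries.ofPowerSeries ℤ ℂ (PowerSeries.mk fun n => matPow (hessToep κ) n 0 0) =
        HahnSeries.ofPowerSeries ℤ ℂ (stieltjesSeries κ) := by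
    rw [stieltjesSeries, map_mul, HahnSeries.ofPowerSeries_X]
    rfl
  have hz : zL * HahnSeries.ofPowerSeries ℤ ℂ (stieltjesSeries κ) =
      HahnSeries.ofPowerSeries ℤ ℂ (momentSeries κ) := by
    rw [stieltjesSeries, map_mul, HahnSeries.ofPowerSeries_X, zL, ← mul_assoc,
      HahnSeries.single_mul_single]
    simp
  rw [hg, sub_mul, hz, ← PowerSeries.coe_C, ← PowerSeries.coe_mul, ← PowerSeries.coe_sub,
    ← PowerSeries.coe_one]
  simp_rw [← PowerSeries.coe_pow, PowerSeries.coeff_coe]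
  split_ifs
  · simp
  · rw [coeff_momentSeries_sub_C_mul_stieltjesSeries]
    ring
end

section
/- Let D(u,t) ∈ ℂ[[u₁,…,uₙ]][t] be monic in t of degree m with D(0,t) = t^m, let F(u,t) ∈ ℂ[[u₁,…,uₙ,t]], and let R(u,t) ∈ ℂ[[u]][t] be the Weierstrass remainder of F upon division by D (the unique polynomial in t of degree < m with F = QD + R for some Q ∈ ℂ[[u,t]]). If t^k divides F(u,t), then every coefficient of R(u,t) lies in the ideal I^⌊k/m⌋, where I = (u₁,…,uₙ). -/
/-!
Write `D = t^m + P`, where the coefficients of `P` lie in `I` because `D(0,t) = t^m` and every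
power series without constant term lies in `I`. For `a + m < k` the coefficient of `t^(a+m)` in
`F = QD + R` vanishes, so `q_a = -[t^(a+m)](QP)`; by induction on `s`, `q_a ∈ I^s` whenever
`a + s m < k`. For `i < m` (and `m ≤ k`) the same comparison gives `r_i = -[t^i](QP)`, which only
involves `q_a` with `a < m`, hence `q_a ∈ I^(⌊k/m⌋-1)` and `r_i ∈ I^⌊k/m⌋`.
-/

namespace MvPowerSeries

variable {σ R : Type*} [CommRing R]

theorem mem_span_X_image_of_coeff_eq_zero [DecidableEq σ] (S : Finset σ) (f : MvPowerSeries σ R)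
    (hf : ∀ e : σ →₀ ℕ, (∀ s ∈ S, e s = 0) → coeff e f = 0) :
    f ∈ Ideal.span (X '' S) := by
  induction S using Finset.induction_on generalizing f with
  | empty => simpa [MvPowerSeries.ext_iff] using hf
  | insert a S _ ih =>
    let r : MvPowerSeries σ R := fun e ↦ if e a = 0 then coeff e f else 0
    have r_coeff (e : σ →₀ ℕ) : coeff e r = if e a = 0 then coeff e f else 0 := rfl
    have hX : X a ∣ f - r := X_dvd_iff.mpr fun e he ↦ by simp [r_coeff, he]
    have hr : r ∈ Ideal.span (X '' S) := ih r fun e he ↦ by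
      rw [r_coeff]
      split_ifs with ha
      · exact hf e (Finset.forall_mem_insert .. |>.mpr ⟨ha, he⟩)
      · rfl
    obtain ⟨g, hg⟩ := hX
    rw [← sub_add_cancel f r, hg, Finset.coe_insert, Set.image_insert_eq, Ideal.span_insert]
    exact Ideal.add_mem _
      (Ideal.mem_sup_left (Ideal.mul_mem_right _ _ (Ideal.mem_span_singleton_self _)))
      (Ideal.mem_sup_right hr)

theorem mem_span_range_X_of_constantCoeff_eq_zero [Fintype σ] {f : MvPowerSeries σ R}
    (hf : constantCoeff f = 0) : f ∈ Ideal.span (Set.range X) := by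
  classical
  rw [← Set.image_univ, ← Finset.coe_univ]
  refine mem_span_X_image_of_coeff_eq_zero _ f fun e he ↦ ?_
  obtain rfl : e = 0 := Finsupp.ext fun s ↦ he s (Finset.mem_univ s)
  exact hf

end MvPowerSeries

namespace PowerSeries

variable {A : Type*} [CommRing A] {I : Ideal A} {m k : ℕ} {D Q R : A⟦X⟧}

theorem coeff_mul_eq_coeff_add_coeff_mul_sub_X_pow (j : ℕ) :
    coeff j (Q * D) = (if m ≤ j then coeff (j - m) Q else 0) + coeff j (Q * (D - X ^ m)) := by
  rw [← coeff_mul_X_pow', ← map_add, ← mul_add, add_sub_cancel]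

theorem coeff_mem_pow_of_coeff_mul_eq_zero (hD : ∀ j, coeff j (D - X ^ m) ∈ I)
    (hQD : ∀ j, m ≤ j → j < k → coeff j (Q * D) = 0) (s : ℕ) :
    ∀ a, a + s * m < k → coeff a Q ∈ I ^ s := by
  induction s with
  | zero => simp
  | succ s ih =>
    intro a ha
    have hQa : coeff a Q = -coeff (a + m) (Q * (D - X ^ m)) := by
      have := coeff_mul_eq_coeff_add_coeff_mul_sub_X_pow (Q := Q) (D := D) (m := m) (a + m)
      rw [hQD _ (by omega) (by nlinarith), if_pos (by omega), Nat.add_sub_cancel] at this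
      exact eq_neg_of_add_eq_zero_left this.symm
    rw [hQa, pow_succ]
    exact neg_mem <| coeff_mul_mem_ideal_mul_ideal_of_coeff_mem_ideal (a + m)
      (fun c hc ↦ ih c (by nlinarith)) (fun b _ ↦ hD b) _ le_rfl

theorem coeff_mem_pow_div_of_X_pow_dvd (hD : ∀ j, coeff j (D - X ^ m) ∈ I)
    (hR : ∀ j, m ≤ j → coeff j R = 0) (hF : X ^ k ∣ Q * D + R) (i : ℕ) :
    coeff i R ∈ I ^ (k / m) := by
  have hF := X_pow_dvd_iff.mp hF
  have hQD (j : ℕ) (hmj : m ≤ j) (hjk : j < k) : coeff j (Q * D) = 0 := by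
    simpa [hR j hmj] using hF j hjk
  rcases le_or_gt m i with hmi | him
  · simp [hR i hmi]
  cases hs : k / m with
  | zero => simp
  | succ s =>
    have hsk : (s + 1) * m ≤ k := hs ▸ Nat.div_mul_le_self k m
    have hRi : coeff i R = -coeff i (Q * (D - X ^ m)) := by
      have := hF i (by nlinarith)
      rw [map_add, coeff_mul_eq_coeff_add_coeff_mul_sub_X_pow (m := m), if_neg (by omega),
        zero_add] at this
      exact eq_neg_of_add_eq_zero_right this
    rw [hRi, pow_succ]
    exact neg_mem <| coeff_mul_mem_ideal_mul_ideal_of_coeff_mem_ideal i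
      (fun c hc ↦ coeff_mem_pow_of_coeff_mul_eq_zero hD hQD s c (by nlinarith))
      (fun b _ ↦ hD b) _ le_rfl

end PowerSeries

open PowerSeries in
theorem weierstrass_remainder_estimate_general (n m k : ℕ)
    (D Rem : Polynomial (MvPowerSeries (Fin n) ℂ))
    (F Q : PowerSeries (MvPowerSeries (Fin n) ℂ))
    (hDmonic : D.Monic) (hDdeg : D.natDegree = m)
    (hD0 : ∀ i < m, MvPowerSeries.constantCoeff (D.coeff i) = 0)
    (hRdeg : Rem.degree < (m : ℕ))
    (hdiv : F = Q * (D : PowerSeries (MvPowerSeries (Fin n) ℂ))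
      + (Rem : PowerSeries (MvPowerSeries (Fin n) ℂ)))
    (hFk : (PowerSeries.X : PowerSeries (MvPowerSeries (Fin n) ℂ)) ^ k ∣ F) :
    ∀ i, Rem.coeff i ∈
      (Ideal.span (Set.range (MvPowerSeries.X :
        Fin n → MvPowerSeries (Fin n) ℂ))) ^ (k / m) := by
  have hD (j : ℕ) : coeff j ((D : PowerSeries (MvPowerSeries (Fin n) ℂ)) - X ^ m) ∈
      Ideal.span (Set.range MvPowerSeries.X) := by
    rw [map_sub, Polynomial.coeff_coe, coeff_X_pow]
    rcases lt_trichotomy j m with hj | rfl | hj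
    · simpa [hj.ne] using MvPowerSeries.mem_span_range_X_of_constantCoeff_eq_zero (hD0 j hj)
    · simp [← hDdeg, hDmonic.coeff_natDegree]
    · simp [hj.ne', Polynomial.coeff_eq_zero_of_natDegree_lt (hDdeg ▸ hj)]
  have hR (j : ℕ) (hj : m ≤ j) : coeff j (Rem : PowerSeries (MvPowerSeries (Fin n) ℂ)) = 0 := by
    rw [Polynomial.coeff_coe]
    exact Polynomial.coeff_eq_zero_of_degree_lt (hRdeg.trans_le (by exact_mod_cast hj))
  intro i
  simpa using coeff_mem_pow_div_of_X_pow_dvd hD hR (hdiv ▸ hFk) i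

/-- Weierstrass division remainder estimate.  Work in
`ℂ[[u₁,…,uₙ]][t] ⊂ ℂ[[u₁,…,uₙ,t]]`, modeled as `Polynomial R ⊂ PowerSeries R`
for `R = MvPowerSeries (Fin n) ℂ`.  Let `D` be monic of degree `m > 0` in `t` with
`D(0,t) = t^m`, and let `F = Q·D + Rem` with `deg_t Rem < m` (Weierstrass division).
If `t^k ∣ F` then every coefficient of `Rem` lies in `I^⌊k/m⌋`, `I = (u₁,…,uₙ)`. -/
theorem weierstrass_remainder_estimate (n m k : ℕ) (hm : 0 < m)
    (D Rem : Polynomial (MvPowerSeries (Fin n) ℂ))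
    (F Q : PowerSeries (MvPowerSeries (Fin n) ℂ))
    (hDmonic : D.Monic) (hDdeg : D.natDegree = m)
    (hD0 : ∀ i < m, MvPowerSeries.constantCoeff (D.coeff i) = 0)
    (hRdeg : Rem.degree < (m : ℕ))
    (hdiv : F = Q * (D : PowerSeries (MvPowerSeries (Fin n) ℂ))
      + (Rem : PowerSeries (MvPowerSeries (Fin n) ℂ)))
    (hFk : (PowerSeries.X : PowerSeries (MvPowerSeries (Fin n) ℂ)) ^ k ∣ F) :
    ∀ i, Rem.coeff i ∈
      (Ideal.span (Set.range (MvPowerSeries.X :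
        Fin n → MvPowerSeries (Fin n) ℂ))) ^ (k / m) :=
  weierstrass_remainder_estimate_general n m k D Rem F Q hDmonic hDdeg hD0 hRdeg hdiv hFk
end
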